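/- arXiv:2103.04407 — 9 statements merged into one kernel-verified Lean document; each statement's English description precedes it below -/
import Mathlib

section
/- For a field F, a ∈ F, x ∈ F and n ≥ 1, one has det(T_n(a) − x·I_n) = E_n(a − x), where E_n is the Dickson polynomial of the second kind with parameter 1 over F. -/
/-- The `n × n` tridiagonal Toeplitz matrix with diagonal entries `a` and
sub/super-diagonal entries `b`. -/
def triToeplitz (F : Type*) [Field F] (n : ℕ) (a b : F) :
    Matrix (Fin n) (Fin n) F :=
  Matrix.of fun i j =>
    if (i : ℕ) = (j : ℕ) then a
    else if (i : ℕ) + 1 = (j : ℕ) ∨ (j : ℕ) + 1 = (i : ℕ) then b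
    else 0

lemma triT_shift (F : Type*) [Field F] (n : ℕ) (c : F) (i j : Fin (n+1)) :
    triToeplitz F (n+2) c 1 i.succ j.succ = triToeplitz F (n+1) c 1 i j := by
  simp only [triToeplitz, Matrix.of_apply, Fin.val_succ]
  split_ifs <;> first | rfl | omega

lemma det_triT (F : Type*) [Field F] (c : F) (n : ℕ) :
    (triToeplitz F n c 1).det = (Polynomial.dickson 2 (1 : F) n).eval c := by
  induction n using Nat.twoStepInduction with
  | zero => simp [Polynomial.dickson_zero, Matrix.det_fin_zero]; norm_num
  | one => simp [Polynomial.dickson_one, Matrix.det_fin_one, triToeplitz]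
  | more n ih1 ih2 =>
    rw [show n+2 = (n+1).succ from rfl, Matrix.det_succ_row_zero]
    rw [Fin.sum_univ_succ, Fin.sum_univ_succ]
    have h0 : triToeplitz F (n+2) c 1 0 0 = c := by simp [triToeplitz]
    have h1 : triToeplitz F (n+2) c 1 0 ((0:Fin (n+1)).succ) = 1 := by
      simp [triToeplitz]
    have hrest : ∀ j : Fin n, triToeplitz F (n+2) c 1 0 j.succ.succ = 0 := by
      intro j; simp [triToeplitz]
    have S1 : ((triToeplitz F (n+2) c 1).submatrix Fin.succ ((0:Fin (n+2)).succAbove)).det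
        = (triToeplitz F (n+1) c 1).det := by
      congr 1
      ext i j
      rw [Fin.succAbove_zero, Matrix.submatrix_apply, triT_shift]
    have S2 : ((triToeplitz F (n+2) c 1).submatrix Fin.succ (((0:Fin (n+1)).succ).succAbove)).det
        = (triToeplitz F n c 1).det := by
      set B := (triToeplitz F (n+2) c 1).submatrix Fin.succ (((0:Fin (n+1)).succ).succAbove) with hB
      rw [Matrix.det_succ_column_zero B, Fin.sum_univ_succ]
      have hB00 : B 0 0 = 1 := by
        simp only [hB, Matrix.submatrix_apply]
        rw [Fin.succAbove_of_castSucc_lt _ _ (by simp)]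
        simp [triToeplitz]
      have hBcol : ∀ i : Fin n, B i.succ 0 = 0 := by
        intro i
        simp only [hB, Matrix.submatrix_apply]
        rw [Fin.succAbove_of_castSucc_lt _ _ (by simp)]
        simp [triToeplitz]
      have hsub : (B.submatrix Fin.succ Fin.succ) = triToeplitz F n c 1 := by
        ext i j
        simp only [hB, Matrix.submatrix_apply]
        rw [Fin.succAbove_of_le_castSucc _ _
          (by simp [Fin.le_castSucc_iff, Fin.lt_def]; exact Fin.le_def.mpr (by simp))]
        simp only [triToeplitz, Matrix.of_apply, Fin.val_succ]
        split_ifs <;> first | rfl | omega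
      simp [hB00, hBcol, hsub]
    rw [S1, S2, h0, h1, Polynomial.dickson_add_two]
    simp only [hrest, Polynomial.eval_sub, Polynomial.eval_mul, Polynomial.eval_X,
      Polynomial.eval_C, ih1, ih2]
    simp
    ring

/-- `det (T_n(a) - x • 1) = E_n (a - x)` where `E_n` is the Dickson polynomial
of the second kind with parameter `1`. -/
theorem stmt_3 (F : Type*) [Field F] (a x : F) (n : ℕ) (hn : 1 ≤ n) :
    (triToeplitz F n a 1 - x • 1).det
      = (Polynomial.dickson 2 (1 : F) n).eval (a - x) := by
  have : triToeplitz F n a 1 - x • 1 = triToeplitz F n (a - x) 1 := by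
    ext i j
    simp only [Matrix.sub_apply, Matrix.smul_apply, Matrix.one_apply, triToeplitz,
      Matrix.of_apply, smul_ite, smul_eq_mul, mul_one, mul_zero]
    by_cases h : i = j
    · simp [h]
    · have h' : (i:ℕ) ≠ (j:ℕ) := fun hc => h (Fin.ext hc)
      simp [h, h']
  rw [this, det_triT]
end

section
/- Let F_q be a finite field of characteristic 2 and let n ≥ 1 be an integer with gcd(n+1, q) = 1 (i.e., n+1 is odd). Then n is even, and for θ a primitive (n+1)-th root of unity in an algebraic closure of F_q, one has E_n(X) = ∏_{i=1}^{n/2} (X − (θ^i + θ^{−i}))² as polynomials over the algebraic closure. -/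
open Polynomial

private lemma dicksonE_zero {R : Type*} [CommRing R] : dickson 2 (1 : R) 0 = 1 := by
  rw [dickson_zero]; norm_num

private lemma dicksonE_eval {R : Type*} [CommRing R] (x y : R) (h : x * y = 1) :
    ∀ k : ℕ, (x - y) * (dickson 2 (1 : R) k).eval (x + y) = x ^ (k + 1) - y ^ (k + 1)
  | 0 => by rw [dicksonE_zero]; simp
  | 1 => by rw [dickson_one]; simp; ring
  | (k + 2) => by
    have ih1 := dicksonE_eval x y h k
    have ih2 := dicksonE_eval x y h (k + 1)
    rw [dickson_add_two]
    simp only [eval_sub, eval_mul, eval_X, eval_C, map_one, one_mul, C_1]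
    linear_combination (x + y) * ih2 - ih1 + (x ^ (k + 1) - y ^ (k + 1)) * h

private lemma dicksonE_monic {R : Type*} [Field R] :
    ∀ k : ℕ, (dickson 2 (1 : R) k).Monic ∧ (dickson 2 (1 : R) k).degree = k
  | 0 => by rw [dicksonE_zero]; exact ⟨monic_one, by simp⟩
  | 1 => by rw [dickson_one]; exact ⟨monic_X, degree_X⟩
  | (k + 2) => by
    obtain ⟨m1, d1⟩ := dicksonE_monic (R := R) k
    obtain ⟨m2, d2⟩ := dicksonE_monic (R := R) (k + 1)
    rw [dickson_add_two, C_1, one_mul, sub_eq_add_neg]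
    have hd : (X * dickson 2 (1 : R) (k + 1)).degree = ((k + 2 : ℕ) : WithBot ℕ) := by
      rw [degree_mul, degree_X, d2]
      push_cast
      ring
    have hlt : (-(dickson 2 (1 : R) k)).degree < (X * dickson 2 (1 : R) (k + 1)).degree := by
      rw [degree_neg, d1, hd]
      exact_mod_cast Nat.lt_add_of_pos_right (by omega)
    exact ⟨(monic_X.mul m2).add_of_left hlt,
      by rw [degree_add_eq_left_of_degree_lt hlt, hd]⟩

private lemma dicksonE_key {R : Type*} [CommRing R] [CharP R 2] :
    ∀ m : ℕ,
      dickson 2 (1 : R) (2 * m + 2)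
          = (dickson 2 (1 : R) (m + 1)).comp (X ^ 2) + (dickson 2 (1 : R) m).comp (X ^ 2)
        ∧ dickson 2 (1 : R) (2 * m + 1) = X * (dickson 2 (1 : R) m).comp (X ^ 2)
  | 0 => by
    have h2 : (2 : R[X]) = 0 := by
      have := CharTwo.two_eq_zero (R := R)
      rw [show (2 : R[X]) = C (2 : R) from (map_ofNat C 2).symm, this, map_zero]
    constructor
    · show dickson 2 (1 : R) 2 = _
      rw [dickson_two, dicksonE_zero, dickson_one, X_comp, one_comp, C_1, one_mul]
      have h3 : (3 - (2 : ℕ) : R[X]) = 1 := by norm_num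
      rw [h3]
      linear_combination -h2
    · show dickson 2 (1 : R) 1 = _
      rw [dickson_one, dicksonE_zero, one_comp, mul_one]
  | (m + 1) => by
    obtain ⟨hA, hB⟩ := dicksonE_key (R := R) m
    have h2 : (2 : R[X]) = 0 := by
      have := CharTwo.two_eq_zero (R := R)
      rw [show (2 : R[X]) = C (2 : R) from (map_ofNat C 2).symm, this, map_zero]
    have e3 : 2 * (m + 1) + 1 = (2 * m + 1) + 2 := by ring
    have e4 : 2 * (m + 1) + 2 = (2 * m + 2) + 2 := by ring
    have hB' : dickson 2 (1 : R) (2 * (m + 1) + 1) = X * (dickson 2 (1 : R) (m + 1)).comp (X ^ 2) := by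
      rw [e3, dickson_add_two, C_1, one_mul, show 2 * m + 1 + 1 = 2 * m + 2 from rfl, hA, hB]
      ring
    refine ⟨?_, hB'⟩
    rw [e4, dickson_add_two, C_1, one_mul, show 2 * m + 2 + 1 = 2 * (m + 1) + 1 from by ring, hB', hA,
      show m + 1 + 1 = m + 2 from rfl, dickson_add_two, C_1, one_mul, sub_comp, mul_comp, X_comp]
    linear_combination -(dickson 2 (1 : R) (m + 1)).comp (X ^ 2) * h2

private lemma dicksonE_sq (m : ℕ) :
    dickson 2 (1 : ZMod 2) (2 * m + 2)
      = (dickson 2 (1 : ZMod 2) (m + 1) + dickson 2 (1 : ZMod 2) m) ^ 2 := by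
  have h := map_frobenius_expand 2 (dickson 2 (1 : ZMod 2) (m + 1) + dickson 2 (1 : ZMod 2) m)
  rw [ZMod.frobenius_zmod, Polynomial.map_id] at h
  rw [(dicksonE_key (R := ZMod 2) m).1, ← add_comp, ← expand_eq_comp_X_pow, h]

/-- Bhargava–Zieve factorization of the Dickson polynomial of the second kind
`E_n` (parameter 1), characteristic 2, `gcd(n+1, q) = 1`: `n` is even and
`E_n` splits into squared linear factors. -/
theorem stmt_5 (F : Type*) [Field F] [Fintype F] [CharP F 2]
    (n : ℕ) (hn : 1 ≤ n) (hcop : Nat.gcd (n + 1) (Fintype.card F) = 1)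
    (θ : AlgebraicClosure F) (hθ : IsPrimitiveRoot θ (n + 1)) :
    Even n ∧
    (Polynomial.dickson 2 (1 : F) n).map (algebraMap F (AlgebraicClosure F))
      = ∏ i ∈ Finset.Icc 1 (n / 2),
          (Polynomial.X - Polynomial.C (θ ^ i + θ⁻¹ ^ i)) ^ 2 := by
  classical
  have hringchar : ringChar F = 2 := by rw [ringChar.eq_iff]; infer_instance
  have hcard2 : 2 ∣ Fintype.card F :=
    Nat.dvd_of_mod_eq_zero (FiniteField.even_card_of_char_two hringchar)
  have heven : Even n := by
    rcases Nat.even_or_odd n with h | h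
    · exact h
    · exfalso
      obtain ⟨k, hk⟩ := h
      have h1 : 2 ∣ n + 1 := ⟨k + 1, by omega⟩
      have := Nat.dvd_gcd h1 hcard2
      rw [hcop] at this
      omega
  refine ⟨heven, ?_⟩
  obtain ⟨m', hm'⟩ := heven
  set m : ℕ := n / 2 with hmdef
  have hm : n = 2 * m := by omega
  have hm1 : 1 ≤ m := by omega
  have hθne : θ ≠ 0 := hθ.ne_zero (Nat.succ_ne_zero n)
  set c : ℕ → AlgebraicClosure F := fun i => θ ^ i + θ⁻¹ ^ i with hc
  set Q : (AlgebraicClosure F)[X] :=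
    dickson 2 (1 : AlgebraicClosure F) m + dickson 2 (1 : AlgebraicClosure F) (m - 1) with hQdef
  have hpow1 : θ ^ (n + 1) = 1 := hθ.pow_eq_one
  -- each `c i` is a root of `Q`
  have hroot : ∀ i ∈ Finset.Icc 1 m, Q.IsRoot (c i) := by
    intro i hi
    rw [Finset.mem_Icc] at hi
    have hxy : θ ^ i * θ⁻¹ ^ i = 1 := by
      rw [inv_pow]
      exact mul_inv_cancel₀ (pow_ne_zero i hθne)
    have key : θ ^ (i * (m + 1)) * θ ^ (i * m) = 1 := by
      rw [← pow_add, show i * (m + 1) + i * m = (n + 1) * i by rw [hm]; ring, pow_mul, hpow1,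
        one_pow]
    have e1 : (θ ^ i) ^ (m + 1) = (θ⁻¹ ^ i) ^ m := by
      rw [← pow_mul, ← pow_mul, inv_pow]
      exact eq_inv_of_mul_eq_one_left key
    have e2 : (θ⁻¹ ^ i) ^ (m + 1) = (θ ^ i) ^ m := by
      rw [← pow_mul, ← pow_mul, inv_pow]
      exact inv_eq_of_mul_eq_one_right key
    have hne : θ ^ i - θ⁻¹ ^ i ≠ 0 := by
      rw [sub_ne_zero]
      intro heq
      have h2i : θ ^ (2 * i) = 1 := by
        rw [two_mul, pow_add]
        nth_rewrite 2 [heq]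
        exact hxy
      have hd := (hθ.pow_eq_one_iff_dvd _).mp h2i
      have := Nat.le_of_dvd (by omega) hd
      omega
    have hEm := dicksonE_eval (θ ^ i) (θ⁻¹ ^ i) hxy m
    have hEm1 := dicksonE_eval (θ ^ i) (θ⁻¹ ^ i) hxy (m - 1)
    rw [show m - 1 + 1 = m from by omega] at hEm1
    have hzero : (θ ^ i - θ⁻¹ ^ i) * Q.eval (θ ^ i + θ⁻¹ ^ i) = 0 := by
      rw [hQdef, eval_add, mul_add, hEm, hEm1, e1, e2]
      ring
    exact (mul_eq_zero.mp hzero).resolve_left hne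
  -- the `c i` are pairwise distinct
  have hinj : ∀ i ∈ Finset.Icc 1 m, ∀ j ∈ Finset.Icc 1 m, c i = c j → i = j := by
    intro i hi j hj hcc
    rw [Finset.mem_Icc] at hi hj
    have hi0 : θ ^ i ≠ 0 := pow_ne_zero _ hθne
    have hj0 : θ ^ j ≠ 0 := pow_ne_zero _ hθne
    have e : θ ^ i + (θ ^ i)⁻¹ = θ ^ j + (θ ^ j)⁻¹ := by
      simpa [hc, inv_pow] using hcc
    have l1 : (θ ^ i)⁻¹ * (θ ^ i * θ ^ j) = θ ^ j := by field_simp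
    have l2 : (θ ^ j)⁻¹ * (θ ^ i * θ ^ j) = θ ^ i := by field_simp
    have hprod : (θ ^ i - θ ^ j) * (θ ^ (i + j) - 1) = 0 := by
      rw [pow_add]
      linear_combination (θ ^ i * θ ^ j) * e - l1 + l2
    rcases mul_eq_zero.mp hprod with h | h
    · rw [sub_eq_zero] at h
      exact hθ.pow_inj (by omega) (by omega) h
    · exfalso
      rw [sub_eq_zero] at h
      have hd := (hθ.pow_eq_one_iff_dvd _).mp h
      have := Nat.le_of_dvd (by omega) hd
      omega
  -- `Q` is monic of degree `m`
  obtain ⟨Qm1, Qd1⟩ := dicksonE_monic (R := AlgebraicClosure F) m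
  obtain ⟨Qm2, Qd2⟩ := dicksonE_monic (R := AlgebraicClosure F) (m - 1)
  have hltQ : (dickson 2 (1 : AlgebraicClosure F) (m - 1)).degree
      < (dickson 2 (1 : AlgebraicClosure F) m).degree := by
    rw [Qd1, Qd2]
    exact_mod_cast by omega
  have QM : Q.Monic := Qm1.add_of_left hltQ
  have Qdeg : Q.degree = (m : WithBot ℕ) := by
    rw [hQdef, degree_add_eq_left_of_degree_lt hltQ, Qd1]
  have Qndeg : Q.natDegree = m := natDegree_eq_of_degree_eq_some Qdeg
  have hQ0 : Q ≠ 0 := QM.ne_zero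
  have hsplits : Q.Splits := IsAlgClosed.splits Q
  have hcardroots : Multiset.card Q.roots = m := by
    rw [splits_iff_card_roots.mp hsplits, Qndeg]
  set s : Multiset (AlgebraicClosure F) := (Finset.Icc 1 m).val.map c with hs_def
  have hnodup : s.Nodup := Multiset.Nodup.map_on hinj (Finset.Icc 1 m).nodup
  have hsub : s ≤ Q.roots := by
    refine Multiset.le_iff_count.mpr fun a => ?_
    by_cases ha : a ∈ s
    · rw [Multiset.count_eq_one_of_mem hnodup ha]
      refine Multiset.one_le_count_iff_mem.mpr ?_
      obtain ⟨i, hi, rfl⟩ := Multiset.mem_map.mp ha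
      exact (mem_roots hQ0).mpr (hroot i hi)
    · rw [Multiset.count_eq_zero_of_notMem ha]
      exact Nat.zero_le _
  have hcards : Multiset.card s = m := by
    rw [hs_def, Multiset.card_map]
    have : Multiset.card (Finset.Icc 1 m).val = (Finset.Icc 1 m).card := rfl
    rw [this, Nat.card_Icc]
    omega
  have hs : s = Q.roots :=
    Multiset.eq_of_le_of_card_le hsub (by rw [hcardroots, hcards])
  have hQfact : Q = ∏ i ∈ Finset.Icc 1 m, (X - C (c i)) := by
    rw [hsplits.eq_prod_roots_of_monic QM, ← hs, hs_def, Multiset.map_map,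
      Finset.prod_eq_multiset_prod]
    rfl
  -- assemble
  have hmap : (dickson 2 (1 : F) n).map (algebraMap F (AlgebraicClosure F))
      = dickson 2 (1 : AlgebraicClosure F) n := by
    rw [map_dickson, map_one]
  have hsq := congrArg
    (Polynomial.map (ZMod.castHom (dvd_refl 2) (AlgebraicClosure F))) (dicksonE_sq (m - 1))
  simp only [Polynomial.map_pow, Polynomial.map_add, map_dickson, map_one,
    show m - 1 + 1 = m from by omega] at hsq
  rw [hmap, show n = 2 * (m - 1) + 2 from by omega, hsq, ← hQdef, hQfact, ← Finset.prod_pow]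
end

section
/- Let F_q be a finite field of characteristic 2, a ∈ F_q, and n ≥ 1 an integer with gcd(n+1, q) = 1. Then n is even, and the code C_n(a) with generator matrix (I_n | T_n(a)) is LCD — equivalently, the matrix I_n + T_n(a)² is invertible — if and only if a ∉ { −1 + θ^i + θ^{−i} : 1 ≤ i ≤ n/2 }, where θ is a primitive (n+1)-th root of unity in an algebraic closure of F_q and F_q is identified with its image in the closure. -/
section Aux

lemma val_succAbove' {n : ℕ} (p : Fin (n+1)) (j : Fin n) :
    ((p.succAbove j : Fin (n+1)) : ℕ) = if (j:ℕ) < (p:ℕ) then (j:ℕ) else (j:ℕ)+1 := by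
  rw [Fin.succAbove]
  rcases Nat.lt_or_ge (j : ℕ) (p : ℕ) with h | h
  · rw [if_pos (by simpa [Fin.lt_def] using h), if_pos h, Fin.coe_castSucc]
  · rw [if_neg (by simpa [Fin.lt_def, Nat.not_lt] using h), if_neg (Nat.not_lt.mpr h),
      Fin.val_succ]

variable {K : Type*} [Field K]

noncomputable def ddSeq (c : K) : ℕ → K
  | 0 => 1
  | 1 => c
  | (k+2) => c * ddSeq c (k+1) - ddSeq c k

lemma ddSeq_add_two (c : K) (k : ℕ) :
    ddSeq c (k+2) = c * ddSeq c (k+1) - ddSeq c k := rfl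

lemma tri_sub1 (n : ℕ) (c : K) :
    (triToeplitz K (n+2) c 1).submatrix Fin.succ ((0 : Fin (n+2)).succAbove) =
      triToeplitz K (n+1) c 1 := by
  ext i j
  simp only [Matrix.submatrix_apply, Fin.succAbove_zero, triToeplitz, Matrix.of_apply,
    Fin.val_succ]
  split_ifs <;> (repeat cases ‹_ ∨ _›) <;>
    first | rfl | omega | (exfalso; omega) | exact (‹False›).elim | tauto

lemma det_tri_rec (n : ℕ) (c : K) :
    (triToeplitz K (n+2) c 1).det =
      c * (triToeplitz K (n+1) c 1).det - (triToeplitz K n c 1).det := by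
  rw [Matrix.det_succ_row_zero, Fin.sum_univ_succ, Fin.sum_univ_succ]
  have hz : ∀ j : Fin n, (triToeplitz K (n+2) c 1) 0 j.succ.succ = 0 := by
    intro j
    simp only [triToeplitz, Matrix.of_apply, Fin.val_succ, Fin.val_zero, or_false,
      false_or, true_or, or_true, if_true, if_false]
    split_ifs <;> (repeat cases ‹_ ∨ _›) <;>
      first | rfl | omega | (exfalso; omega) | exact (‹False›).elim | tauto
  have h00 : (triToeplitz K (n+2) c 1) 0 0 = c := by simp [triToeplitz]
  have h01 : (triToeplitz K (n+2) c 1) 0 ((0 : Fin (n+1)).succ) = 1 := by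
    simp only [triToeplitz, Matrix.of_apply, Fin.val_succ, Fin.val_zero, or_false,
      false_or, true_or, or_true, if_true, if_false]
    split_ifs <;> (repeat cases ‹_ ∨ _›) <;>
      first | rfl | omega | (exfalso; omega) | exact (‹False›).elim | tauto
  rw [Finset.sum_eq_zero (fun j _ => by rw [hz j]; ring), h00, h01, tri_sub1]
  have hB : ((triToeplitz K (n+2) c 1).submatrix Fin.succ
      ((0 : Fin (n+1)).succ.succAbove)).det = (triToeplitz K n c 1).det := by
    rw [Matrix.det_succ_column_zero, Fin.sum_univ_succ]
    have hz2 : ∀ i : Fin n, ((triToeplitz K (n+2) c 1).submatrix Fin.succ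
        ((0 : Fin (n+1)).succ.succAbove)) i.succ 0 = 0 := by
      intro i
      simp only [Matrix.submatrix_apply, triToeplitz, Matrix.of_apply, val_succAbove',
        Fin.val_succ, Fin.val_zero, or_false, false_or, true_or, or_true, if_true, if_false]
      split_ifs <;> (repeat cases ‹_ ∨ _›) <;>
        first | rfl | omega | (exfalso; omega) | exact (‹False›).elim | tauto
    have hB0 : ((triToeplitz K (n+2) c 1).submatrix Fin.succ
        ((0 : Fin (n+1)).succ.succAbove)) 0 0 = 1 := by
      simp only [Matrix.submatrix_apply, triToeplitz, Matrix.of_apply, val_succAbove',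
        Fin.val_succ, Fin.val_zero, or_false, false_or, true_or, or_true, if_true, if_false]
      split_ifs <;> (repeat cases ‹_ ∨ _›) <;>
        first | rfl | omega | (exfalso; omega) | exact (‹False›).elim | tauto
    rw [Finset.sum_eq_zero (fun i _ => by rw [hz2 i]; ring), hB0]
    have hM : ((triToeplitz K (n+2) c 1).submatrix Fin.succ
        ((0 : Fin (n+1)).succ.succAbove)).submatrix ((0 : Fin (n+1)).succAbove) Fin.succ
        = triToeplitz K n c 1 := by
      ext i j
      simp only [Matrix.submatrix_apply, triToeplitz, Matrix.of_apply, val_succAbove',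
        Fin.val_succ, Fin.val_zero, or_false, false_or, true_or, or_true, if_true, if_false]
      simp only [Nat.not_lt_zero, Nat.add_lt_add_iff_right, if_false]
      split_ifs <;> (repeat cases ‹_ ∨ _›) <;>
        first | rfl | omega | (exfalso; omega) | exact (‹False›).elim | tauto
    rw [hM]
    simp
  rw [hB]
  simp only [Fin.val_zero, Fin.val_succ, pow_zero, pow_succ, pow_zero]
  ring

lemma det_tri_eq' (c : K) : ∀ n, (triToeplitz K n c 1).det = ddSeq c n := by
  have key : ∀ n, (triToeplitz K n c 1).det = ddSeq c n ∧
      (triToeplitz K (n+1) c 1).det = ddSeq c (n+1) := by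
    intro n
    induction n with
    | zero =>
      constructor
      · simp [ddSeq, Matrix.det_fin_zero]
      · rw [Matrix.det_fin_one]
        simp [ddSeq, triToeplitz]
    | succ k ih =>
      refine ⟨ih.2, ?_⟩
      rw [det_tri_rec, ih.1, ih.2]
      rfl
  exact fun n => (key n).1

lemma ddSeq_eval' (t : K) (ht : t ≠ 0) :
    ∀ n, (t - t⁻¹) * ddSeq (t + t⁻¹) n = t^(n+1) - (t⁻¹)^(n+1) := by
  have key : ∀ n, (t - t⁻¹) * ddSeq (t + t⁻¹) n = t^(n+1) - (t⁻¹)^(n+1) ∧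
      (t - t⁻¹) * ddSeq (t + t⁻¹) (n+1) = t^(n+2) - (t⁻¹)^(n+2) := by
    intro n
    induction n with
    | zero =>
      constructor
      · simp [ddSeq]
      · show (t - t⁻¹) * (t + t⁻¹) = _
        ring
    | succ k ih =>
      refine ⟨ih.2, ?_⟩
      have e : k+1+1 = k+2 := rfl
      rw [e]
      calc (t - t⁻¹) * ddSeq (t + t⁻¹) (k+2)
          = (t + t⁻¹) * ((t - t⁻¹) * ddSeq (t + t⁻¹) (k+1))
            - ((t - t⁻¹) * ddSeq (t + t⁻¹) k) := by
            rw [ddSeq_add_two]; ring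
        _ = (t + t⁻¹) * (t^(k+2) - (t⁻¹)^(k+2)) - (t^(k+1) - (t⁻¹)^(k+1)) := by
            rw [ih.1, ih.2]
        _ = t^(k+2+1) - (t⁻¹)^(k+2+1) := by
            have hti := mul_inv_cancel₀ ht
            linear_combination (t^(k+1) - t⁻¹^(k+1)) * hti
  exact fun n => (key n).1

lemma ddSeq_zero_even' (m : ℕ) : ddSeq (0 : K) (2*m) = (-1)^m := by
  induction m with
  | zero => simp [ddSeq]
  | succ k ih =>
    have h : 2*(k+1) = (2*k)+2 := by ring
    rw [h]
    show (0:K) * ddSeq 0 (2*k+1) - ddSeq 0 (2*k) = _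
    rw [ih]
    ring

lemma sq_eq_one_char_two (h2 : (2:K) = 0) (x : K) (hx : x^2 = 1) : x = 1 := by
  have h : (x - 1)^2 = 0 := by linear_combination hx + (1 - x) * h2
  have h4 : x - 1 = 0 := pow_eq_zero_iff (n := 2) (by norm_num) |>.mp h
  exact sub_eq_zero.mp h4

lemma core' [IsAlgClosed K] [CharP K 2] (n : ℕ) (hn1 : 1 ≤ n) (hn : Even n)
    (θ : K) (hθ : IsPrimitiveRoot θ (n+1)) (c : K) :
    ddSeq c n = 0 ↔ ∃ i, 1 ≤ i ∧ i ≤ n/2 ∧ c = θ^i + (θ^i)⁻¹ := by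
  have h2 : (2:K) = 0 := by exact_mod_cast CharP.cast_eq_zero K 2
  have hn2 : n % 2 = 0 := Nat.even_iff.mp hn
  have hθ0 : θ ≠ 0 := hθ.ne_zero (Nat.succ_ne_zero n)
  have hθ1 : θ ^ (n+1) = 1 := hθ.pow_eq_one
  constructor
  · intro h0
    obtain ⟨t, ht⟩ := IsAlgClosed.exists_root
      (Polynomial.C (1:K) * Polynomial.X^2 + Polynomial.C c * Polynomial.X + Polynomial.C 1)
      (by rw [Polynomial.degree_quadratic one_ne_zero]; simp)
    have ht' : t^2 + c * t + 1 = 0 := by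
      simp only [Polynomial.IsRoot, Polynomial.eval_add, Polynomial.eval_mul,
        Polynomial.eval_pow, Polynomial.eval_C, Polynomial.eval_X, one_mul,
        Polynomial.eval_one] at ht
      linear_combination ht
    have ht0 : t ≠ 0 := by
      rintro rfl
      rw [ne_eq] at *
      simp at ht'
    have h' : t * c = t^2 + 1 := by linear_combination (-1) * ht' + (c*t) * h2
    have e2 : t * (t + t⁻¹) = t^2 + 1 := by field_simp
    have hc : c = t + t⁻¹ := mul_left_cancel₀ ht0 (by rw [h', e2])
    by_cases h1 : t = 1
    · exfalso
      have hc0 : c = 0 := by rw [hc, h1, inv_one]; linear_combination h2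
      obtain ⟨m, hm⟩ := hn
      have hnm : n = 2*m := by omega
      rw [hc0, hnm, ddSeq_zero_even'] at h0
      exact pow_ne_zero m (by norm_num : (-1:K) ≠ 0) h0
    · have tsub : t - t⁻¹ ≠ 0 := by
        intro e
        apply h1
        apply sq_eq_one_char_two h2
        have h5 := sub_eq_zero.mp e
        field_simp at h5
        linear_combination h5
      have key := ddSeq_eval' t ht0 n
      rw [← hc, h0, mul_zero] at key
      have hu : t^(n+1) = 1 := by
        apply sq_eq_one_char_two h2
        have h3 : t^(n+1) = (t^(n+1))⁻¹ := by
          rw [← inv_pow]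
          linear_combination -key
        have h4 : t^(n+1) * t^(n+1) = 1 := by
          nth_rewrite 2 [h3]
          exact mul_inv_cancel₀ (pow_ne_zero _ ht0)
        linear_combination h4
      haveI : NeZero (n+1) := ⟨Nat.succ_ne_zero n⟩
      obtain ⟨i, hilt, hie⟩ := hθ.eq_pow_of_pow_eq_one hu
      have hi0 : i ≠ 0 := by
        rintro rfl
        simp only [pow_zero] at hie
        exact h1 hie.symm
      by_cases hsmall : i ≤ n/2
      · exact ⟨i, by omega, hsmall, by rw [hie, hc]⟩
      · refine ⟨n+1-i, by omega, by omega, ?_⟩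
        have hmul : θ^(n+1-i) * θ^i = 1 := by
          rw [← pow_add]
          have he : n+1-i+i = n+1 := by omega
          rw [he, hθ1]
        have hinv : θ^(n+1-i) = (θ^i)⁻¹ := eq_inv_of_mul_eq_one_left hmul
        rw [hinv, hie, inv_inv, hc]
        ring
  · rintro ⟨i, hi1, hi2, rfl⟩
    set t := θ^i with hti
    have ht0 : t ≠ 0 := pow_ne_zero _ hθ0
    have tsub : t - t⁻¹ ≠ 0 := by
      intro e
      have hsq : t^2 = 1 := by
        have h5 := sub_eq_zero.mp e
        calc t^2 = t * t := sq t
        _ = t * t⁻¹ := by rw [← h5]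
        _ = 1 := mul_inv_cancel₀ ht0
      have h6 : θ^(2*i) = 1 := by rw [pow_mul']; exact hsq
      have h7 := (hθ.pow_eq_one_iff_dvd (2*i)).mp h6
      have h8 := Nat.le_of_dvd (by omega) h7
      omega
    have hpow : t^(n+1) = 1 := by
      rw [hti, ← pow_mul, mul_comm, pow_mul, hθ1, one_pow]
    have hkey : (t - t⁻¹) * ddSeq (t + t⁻¹) n = 0 := by
      rw [ddSeq_eval' t ht0 n, inv_pow, hpow, inv_one, sub_self]
    exact (mul_eq_zero.mp hkey).resolve_left tsub

lemma main_aux {F : Type*} [Field F] [CharP F 2] {L : Type*} [Field L] [IsAlgClosed L]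
    [CharP L 2] (φ : F →+* L) (n : ℕ) (hn : 1 ≤ n) (hne : Even n)
    (θ : L) (hθ : IsPrimitiveRoot θ (n + 1)) (a : F) :
    IsUnit ((1 : Matrix (Fin n) (Fin n) F) + (triToeplitz F n a 1) ^ 2) ↔
      φ a ∉ (fun i : ℕ => -1 + θ ^ i + θ⁻¹ ^ i) '' (Set.Icc 1 (n / 2)) := by
  set T := triToeplitz F n a 1 with hT
  have hTT : T + T = 0 := by
    ext i j
    simp only [Matrix.add_apply, Matrix.zero_apply]
    exact CharTwo.add_self_eq_zero _
  have hsq : (1 + T)^2 = 1 + T^2 := by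
    have h := sq (1 + T)
    have h2 : (1 + T) * (1 + T) = 1 + (T + T) + T * T := by noncomm_ring
    rw [h, h2, hTT, add_zero, ← sq]
  have hone : (1 : Matrix (Fin n) (Fin n) F) + T = triToeplitz F n (a+1) 1 := by
    ext i j
    simp only [Matrix.add_apply, Matrix.one_apply, hT, triToeplitz, Matrix.of_apply,
      Fin.ext_iff]
    split_ifs <;> first | ring | omega | (exfalso; omega)
  have hmap : (triToeplitz F n (a+1) 1).map φ = triToeplitz L n (φ a + 1) 1 := by
    ext i j
    simp only [Matrix.map_apply, triToeplitz, Matrix.of_apply, apply_ite φ, map_add,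
      map_one, map_zero]
  have hunit : IsUnit ((1 : Matrix (Fin n) (Fin n) F) + T ^ 2) ↔
      ddSeq (φ a + 1) n ≠ 0 := by
    rw [← hsq, Matrix.isUnit_iff_isUnit_det, Matrix.det_pow, isUnit_iff_ne_zero,
      pow_ne_zero_iff (two_ne_zero), hone]
    have hdetmap : φ ((triToeplitz F n (a+1) 1).det) = ddSeq (φ a + 1) n := by
      rw [RingHom.map_det, RingHom.mapMatrix_apply, hmap, det_tri_eq']
    constructor
    · intro h he
      exact h ((map_eq_zero φ).mp (hdetmap.trans he))
    · intro h he
      exact h (hdetmap.symm.trans (by rw [he, map_zero]))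
  rw [hunit]
  have hmem : φ a ∈ (fun i : ℕ => -1 + θ ^ i + θ⁻¹ ^ i) '' (Set.Icc 1 (n / 2)) ↔
      ddSeq (φ a + 1) n = 0 := by
    rw [core' n hn hne θ hθ]
    constructor
    · rintro ⟨i, ⟨hi1, hi2⟩, he⟩
      refine ⟨i, hi1, hi2, ?_⟩
      simp only [inv_pow] at he
      linear_combination -he
    · rintro ⟨i, hi1, hi2, he⟩
      refine ⟨i, ⟨hi1, hi2⟩, ?_⟩
      simp only [inv_pow]
      linear_combination -he
  constructor
  · intro h hm
    exact h (hmem.mp hm)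
  · intro h hm
    exact h (hmem.mpr hm)

end Aux

/-- Characteristic 2, `gcd(n+1,q)=1`: `n` is even and the double Toeplitz code
`C_n(a)` with generator matrix `(I | T_n(a))` is LCD (equivalently,
`1 + T_n(a)^2` is invertible) iff `a ∉ {-1 + θ^i + θ^{-i} : 1 ≤ i ≤ n/2}`. -/
theorem stmt_6 (F : Type*) [Field F] [Fintype F] [CharP F 2]
    (n : ℕ) (hn : 1 ≤ n) (hcop : Nat.gcd (n + 1) (Fintype.card F) = 1)
    (θ : AlgebraicClosure F) (hθ : IsPrimitiveRoot θ (n + 1)) (a : F) :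
    Even n ∧
    (IsUnit ((1 : Matrix (Fin n) (Fin n) F) + (triToeplitz F n a 1) ^ 2) ↔
      algebraMap F (AlgebraicClosure F) a ∉
        (fun i : ℕ => -1 + θ ^ i + θ⁻¹ ^ i) '' (Set.Icc 1 (n / 2))) := by
  haveI : Fact (Nat.Prime 2) := ⟨Nat.prime_two⟩
  obtain ⟨k, -, hcard⟩ := FiniteField.card F 2
  have hdvd : 2 ∣ Fintype.card F := by
    rw [hcard]; exact dvd_pow_self 2 (by positivity)
  have hodd : ¬ (2 ∣ (n+1)) := by
    intro h
    have : 2 ∣ Nat.gcd (n+1) (Fintype.card F) := Nat.dvd_gcd h hdvd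
    omega
  have hne : Even n := Nat.even_iff.mpr (by omega)
  haveI : CharP (AlgebraicClosure F) 2 :=
    charP_of_injective_algebraMap (algebraMap F (AlgebraicClosure F)).injective 2
  exact ⟨hne, main_aux (algebraMap F (AlgebraicClosure F)) n hn hne θ hθ a⟩
end

section
/- Let F_q be a finite field of characteristic 2 and n ≥ 1 an integer with gcd(n+1, q) = 1. If q > n/2, then there exists a ∈ F_q such that the matrix I_n + T_n(a)² is invertible (i.e., the code C_n(a) with generator matrix (I_n | T_n(a)) is LCD). -/
open Matrix Polynomial Polynomial.Chebyshev

namespace Polynomial.Chebyshev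
variable {R : Type*} [CommRing R]

theorem S_add (m n : ℤ) : S R (m + n) = S R m * S R n - S R (m - 1) * S R (n - 1) := by
  induction n using Polynomial.Chebyshev.induct with
  | zero => simp
  | one => rw [S_add_one]; simp [mul_comm]
  | add_two n ih1 ih0 =>
    linear_combination (norm := ring_nf) S_add_two R (m + n) + X * ih1 - ih0
      - S R m * S_add_two R n + S R (m - 1) * S_add_one R n
  | neg_add_one n ih0 ih1 =>
    linear_combination (norm := ring_nf) S_sub_one R (m - n) + X * ih0 - ih1
      - S R m * S_sub_one R (-n) + S R (m - 1) * S_sub_two R (-n)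

theorem S_two_mul (m : ℤ) : S R (2 * m) = (S R m - S R (m - 1)) * (S R m + S R (m - 1)) := by
  rw [two_mul, S_add]; ring

section Nontrivial
variable [Nontrivial R]

theorem monic_S_natCast_and_degree (n : ℕ) : (S R n).Monic ∧ (S R n).degree = n := by
  induction n using Nat.twoStepInduction with
  | zero => simp
  | one => simp
  | more n ih0 ih1 =>
    have hX : (X * S R (n + 1 : ℕ)).degree = ((n + 2 : ℕ) : WithBot ℕ) := by
      rw [ih1.1.degree_mul, ih1.2, degree_X]; norm_cast; omega
    have hlt : (S R n).degree < (X * S R (n + 1 : ℕ)).degree := by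
      rw [ih0.2, hX]; exact_mod_cast (by omega : n < n + 2)
    have hcast : ((n + 2 : ℕ) : ℤ) = (n : ℤ) + 2 := by push_cast; ring
    rw [hcast, S_add_two, ← Nat.cast_succ]
    exact ⟨(monic_X.mul ih1.1).sub_of_left hlt, (degree_sub_eq_left_of_degree_lt hlt).trans hX⟩

theorem monic_S_add_S_sub_one_and_natDegree (m : ℕ) :
    (S R m + S R (m - 1)).Monic ∧ (S R m + S R (m - 1)).natDegree = m := by
  cases m with
  | zero => simp
  | succ k =>
    obtain ⟨hmonic, hdeg⟩ := monic_S_natCast_and_degree (R := R) (k + 1)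
    have hlt : (S R k).degree < (S R (k + 1 : ℕ)).degree := by
      rw [hdeg, (monic_S_natCast_and_degree k).2]; exact_mod_cast k.lt_succ_self
    rw [Nat.cast_succ, add_sub_cancel_right, ← Nat.cast_succ]
    exact ⟨hmonic.add_of_left hlt,
      (natDegree_add_eq_left_of_degree_lt hlt).trans (natDegree_eq_of_degree_eq_some hdeg)⟩

end Nontrivial

section CharTwo
variable [CharP R 2]

theorem S_two_mul_eq_sq (m : ℤ) : S R (2 * m) = (S R m + S R (m - 1)) ^ 2 := by
  rw [S_two_mul, CharTwo.sub_eq_add, sq]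

theorem exists_eval_S_two_mul_ne_zero [IsDomain R] {m : ℕ} (hm : (m : Cardinal) < Cardinal.mk R) :
    ∃ b : R, (S R (2 * m : ℕ)).eval b ≠ 0 := by
  obtain ⟨hmonic, hdeg⟩ := monic_S_add_S_sub_one_and_natDegree (R := R) m
  obtain ⟨b, hb⟩ := exists_eval_ne_zero_of_natDegree_lt_card _ hmonic.ne_zero (by rwa [hdeg])
  refine ⟨b, ?_⟩
  rw [Nat.cast_mul, Nat.cast_two, S_two_mul_eq_sq, eval_pow]
  exact pow_ne_zero 2 hb

end CharTwo

end Polynomial.Chebyshev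

section
variable {F : Type*} [Field F] {n : ℕ}

/-- `padVec v k = v (k - 1)` for `1 ≤ k ≤ n` and `0` otherwise: with this padding every row of
`triToeplitz F n a 1 *ᵥ v` is the same three-term expression, including the first and last. -/
def padVec (v : Fin n → F) (k : ℕ) : F := ∑ j : Fin n, if (j : ℕ) + 1 = k then v j else 0

@[simp] theorem padVec_zero (v : Fin n → F) : padVec v 0 = 0 := by simp [padVec]

@[simp] theorem padVec_succ (v : Fin n → F) (i : Fin n) : padVec v (i + 1) = v i := by
  simp [padVec, Fin.val_inj]

theorem padVec_of_le (v : Fin n → F) {k : ℕ} (hk : n ≤ k) : padVec v (k + 1) = 0 :=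
  Finset.sum_eq_zero fun j _ => if_neg (by omega)

theorem triToeplitz_mulVec_apply (a : F) (v : Fin n → F) (i : Fin n) :
    (triToeplitz F n a 1 *ᵥ v) i = padVec v i + a * padVec v (i + 1) + padVec v (i + 2) := by
  simp only [mulVec, dotProduct, padVec, Finset.mul_sum, ← Finset.sum_add_distrib]
  refine Finset.sum_congr rfl fun j _ => ?_
  simp only [triToeplitz, of_apply]
  split_ifs <;> first | omega | ring

theorem padVec_succ_eq_eval_S_mul (a : F) {v : Fin n → F} (hv : triToeplitz F n a 1 *ᵥ v = 0) :
    ∀ k ≤ n, padVec v (k + 1) = (S F k).eval (-a) * padVec v 1 := by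
  intro k
  induction k using Nat.twoStepInduction with
  | zero => simp
  | one =>
    intro hk
    have hrow := congrFun hv ⟨0, by omega⟩
    rw [triToeplitz_mulVec_apply, Pi.zero_apply] at hrow
    simp only [padVec_zero, zero_add] at hrow
    simp only [Nat.cast_one, S_one, eval_X]
    linear_combination hrow
  | more k ih0 ih1 =>
    intro hk
    have hrow := congrFun hv ⟨k + 1, by omega⟩
    rw [triToeplitz_mulVec_apply, Pi.zero_apply, ih0 (by omega), ih1 (by omega)] at hrow
    push_cast at hrow ⊢
    rw [S_add_two, eval_sub, eval_mul, eval_X]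
    linear_combination hrow

theorem isUnit_triToeplitz_of_eval_S_ne_zero (a : F) (h : (S F n).eval (-a) ≠ 0) :
    IsUnit (triToeplitz F n a 1) := by
  refine (isUnit_iff_isUnit_det _).mpr (isUnit_iff_ne_zero.mpr fun hdet => ?_)
  obtain ⟨v, hv0, hv⟩ := exists_mulVec_eq_zero_iff.mpr hdet
  have hv1 : padVec v 1 = 0 := by
    have hlast := padVec_succ_eq_eval_S_mul a hv n le_rfl
    rw [padVec_of_le v le_rfl] at hlast
    exact (mul_eq_zero.mp hlast.symm).resolve_left h
  refine hv0 (funext fun j => ?_)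
  rw [← padVec_succ v j, padVec_succ_eq_eval_S_mul a hv j j.is_le', hv1, mul_zero, Pi.zero_apply]

theorem triToeplitz_add_one (a b : F) :
    triToeplitz F n (a + 1) b = 1 + triToeplitz F n a b := by
  ext i j
  by_cases hij : i = j
  · subst hij; simp [triToeplitz, add_comm]
  · simp [triToeplitz, hij, Fin.val_inj]

theorem triToeplitz_add_one_sq [CharP F 2] (a b : F) :
    triToeplitz F n (a + 1) b ^ 2 = 1 + triToeplitz F n a b ^ 2 := by
  rw [triToeplitz_add_one]
  set T := triToeplitz F n a b
  calc (1 + T) ^ 2 = 1 + (2 : F) • T + T ^ 2 := by rw [two_smul]; noncomm_ring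
    _ = 1 + T ^ 2 := by rw [CharTwo.two_eq_zero, zero_smul, add_zero]

end

theorem stmt_8_general (F : Type*) [Field F] [Fintype F] [CharP F 2]
    (n : ℕ) (hcop : Nat.gcd (n + 1) (Fintype.card F) = 1)
    (hq : n / 2 < Fintype.card F) :
    ∃ a : F,
      IsUnit ((1 : Matrix (Fin n) (Fin n) F) + (triToeplitz F n a 1) ^ 2) := by
  have hq_even : 2 ∣ Fintype.card F :=
    (CharP.cast_eq_zero_iff F 2 _).mp (FiniteField.cast_card_eq_zero F)
  obtain ⟨m, rfl⟩ : 2 ∣ n := by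
    have : ¬ 2 ∣ n + 1 := fun h => by simpa [hcop] using Nat.dvd_gcd h hq_even
    omega
  obtain ⟨b, hb⟩ := exists_eval_S_two_mul_ne_zero (R := F)
    (by rw [Cardinal.mk_fintype]; exact_mod_cast (by omega : m < Fintype.card F))
  refine ⟨-b - 1, ?_⟩
  rw [← triToeplitz_add_one_sq, sub_add_cancel]
  exact (isUnit_triToeplitz_of_eval_S_ne_zero _ (by rwa [neg_neg])).pow 2

/-- Characteristic 2, `gcd(n+1,q)=1`, `q > n/2`: there exists `a` such that the
double Toeplitz code `C_n(a)` is LCD, i.e. `1 + T_n(a)^2` is invertible. -/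
theorem stmt_8 (F : Type*) [Field F] [Fintype F] [CharP F 2]
    (n : ℕ) (hn : 1 ≤ n) (hcop : Nat.gcd (n + 1) (Fintype.card F) = 1)
    (hq : n / 2 < Fintype.card F) :
    ∃ a : F,
      IsUnit ((1 : Matrix (Fin n) (Fin n) F) + (triToeplitz F n a 1) ^ 2) :=
  stmt_8_general F n hcop hq
end

section
/- Let F_q be a finite field of odd characteristic and n ≥ 1 an integer with gcd(n+1, q) = 1. If q > 2n, then there exists a ∈ F_q such that the matrix I_n + T_n(a)² is invertible (i.e., the code C_n(a) with generator matrix (I_n | T_n(a)) is LCD). -/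
open Matrix Polynomial

lemma triToeplitz_eq_smul_add (F : Type*) [Field F] (n : ℕ) (a : F) :
    triToeplitz F n a 1 = a • (1 : Matrix (Fin n) (Fin n) F) + triToeplitz F n 0 1 := by
  ext i j
  simp only [triToeplitz, Matrix.add_apply, Matrix.smul_apply, Matrix.one_apply, Matrix.of_apply,
    smul_eq_mul]
  rcases eq_or_ne (i : ℕ) (j : ℕ) with h | h
  · have : i = j := Fin.ext h
    simp [this]
  · have : i ≠ j := fun hh => h (by rw [hh])
    simp [h, this]

/-- Odd characteristic, `gcd(n+1,q)=1`, `q > 2n`: there exists `a` such that the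
double Toeplitz code `C_n(a)` is LCD, i.e. `1 + T_n(a)^2` is invertible. -/
theorem stmt_9 (F : Type*) [Field F] [Fintype F]
    (p : ℕ) [Fact p.Prime] [CharP F p] (hp : Odd p)
    (n : ℕ) (hn : 1 ≤ n) (hcop : Nat.gcd (n + 1) (Fintype.card F) = 1)
    (hq : 2 * n < Fintype.card F) :
    ∃ a : F,
      IsUnit ((1 : Matrix (Fin n) (Fin n) F) + (triToeplitz F n a 1) ^ 2) := by
  classical
  set N : Matrix (Fin n) (Fin n) F := triToeplitz F n 0 1 with hN
  set A : Matrix (Fin n ⊕ Fin n) (Fin n ⊕ Fin n) F := fromBlocks 0 1 (-1) 0 with hA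
  set B : Matrix (Fin n ⊕ Fin n) (Fin n ⊕ Fin n) F := fromBlocks 1 N (-N) 1 with hB
  set P : F[X] := det ((X : F[X]) • A.map C + B.map C) with hP
  have hdeg : P.natDegree ≤ 2 * n := by
    have := Polynomial.natDegree_det_X_add_C_le A B
    simpa [Fintype.card_sum, two_mul] using this
  have hcoeff : P.coeff (2 * n) = det A := by
    have := Polynomial.coeff_det_X_add_C_card A B
    simpa [Fintype.card_sum, two_mul] using this
  have hdetA2 : det A * det A = 1 := by
    rw [← det_mul]
    have : A * A = -1 := by
      rw [hA]
      ext (i | i) (j | j) <;>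
        simp [Matrix.fromBlocks_multiply, Matrix.mul_apply, Matrix.one_apply,
          Finset.sum_ite_eq, ← Matrix.mul_apply]
    rw [this]
    have : (-1 : Matrix (Fin n ⊕ Fin n) (Fin n ⊕ Fin n) F) = -(1 : Matrix _ _ F) := rfl
    rw [this, Matrix.det_neg, det_one, mul_one, Fintype.card_sum, Fintype.card_fin, ← two_mul,
      Even.neg_one_pow ⟨n, two_mul n⟩]
  have hA0 : det A ≠ 0 := by
    intro h; rw [h, zero_mul] at hdetA2; exact zero_ne_one hdetA2
  have hP0 : P ≠ 0 := by
    intro h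
    rw [h, Polynomial.coeff_zero] at hcoeff
    exact hA0 hcoeff.symm
  obtain ⟨a, ha⟩ := P.exists_eval_ne_zero_of_natDegree_lt_card hP0 (by
    rw [Cardinal.mk_fintype]
    exact_mod_cast lt_of_le_of_lt hdeg hq)
  refine ⟨a, ?_⟩
  have heval : P.eval a = det ((1 : Matrix (Fin n) (Fin n) F) + (triToeplitz F n a 1) ^ 2) := by
    have h1 : P.eval a = det (((X : F[X]) • A.map C + B.map C).map (Polynomial.evalRingHom a)) := by
      have := RingHom.map_det (Polynomial.evalRingHom a) ((X : F[X]) • A.map C + B.map C)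
      rw [RingHom.mapMatrix_apply] at this
      exact this
    have h2 : ((X : F[X]) • A.map C + B.map C).map (Polynomial.evalRingHom a)
        = a • A + B := by
      ext i j
      simp [Matrix.map_apply]
      ring
    rw [h1, h2, hA, hB]
    have h3 : a • (fromBlocks 0 1 (-1) 0 : Matrix (Fin n ⊕ Fin n) (Fin n ⊕ Fin n) F)
        + fromBlocks 1 N (-N) 1
        = fromBlocks 1 (triToeplitz F n a 1) (-(triToeplitz F n a 1)) 1 := by
      rw [Matrix.fromBlocks_smul, Matrix.fromBlocks_add]
      congr 1 <;> simp [triToeplitz_eq_smul_add F n a, hN] <;> abel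
    rw [h3, det_fromBlocks_one₁₁]
    congr 1
    rw [sq]
    noncomm_ring
  rw [Matrix.isUnit_iff_isUnit_det, isUnit_iff_ne_zero, ← heval]
  exact ha
end

section
/- Let F_q be a finite field with q even and n ≥ 1 an integer with gcd(n+1, q(q²−1)) = 1. Then for every a ∈ F_q the matrix I_n + T_n(a)² is invertible (i.e., the code C_n(a) with generator matrix (I_n | T_n(a)) is LCD for all a ∈ F_q). -/
def cheb {F : Type*} [Field F] (b : F) : ℕ → F
  | 0 => 1
  | 1 => b
  | (j+2) => b * cheb b (j+1) + cheb b j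

lemma cheb_map {F K : Type*} [Field F] [Field K] (f : F →+* K) (b : F) (j : ℕ) :
    f (cheb b j) = cheb (f b) j := by
  induction j using Nat.strong_induction_on with
  | _ j ih =>
    match j with
    | 0 => simp [cheb]
    | 1 => simp [cheb]
    | (j+2) => simp [cheb, ih (j+1) (by omega), ih j (by omega)]

lemma cheb_zero_even {F : Type*} [Field F] (j : ℕ) (hj : Even j) :
    cheb (0 : F) j = 1 := by
  obtain ⟨k, rfl⟩ := hj
  induction k with
  | zero => simp [cheb]
  | succ k ih =>
      have : k + 1 + (k + 1) = (k + k) + 2 := by omega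
      rw [this, cheb]
      simpa using ih

lemma cheb_closed {K : Type*} [Field K] [CharP K 2] (ζ b : K)
    (hb : ζ * b = ζ ^ 2 + 1) (j : ℕ) :
    cheb b j * (ζ ^ 2 + 1) * ζ ^ j = ζ ^ (2 * j + 2) + 1 := by
  have h2 : (2 : K) = 0 := by simpa using CharP.cast_eq_zero K 2
  induction j using Nat.strong_induction_on with
  | _ j ih =>
    match j with
    | 0 => simp [cheb]
    | 1 =>
        show b * (ζ ^ 2 + 1) * ζ ^ 1 = ζ ^ (2 * 1 + 2) + 1
        linear_combination (ζ ^ 2 + 1) * hb + ζ ^ 2 * h2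
    | (j+2) =>
        have h1 := ih (j+1) (by omega)
        have h0 := ih j (by omega)
        show (b * cheb b (j+1) + cheb b j) * (ζ ^ 2 + 1) * ζ ^ (j+2)
            = ζ ^ (2 * (j+2) + 2) + 1
        linear_combination (ζ * b) * h1 + ζ ^ 2 * h0
          + (ζ ^ (2*j+4) + 1) * hb + (ζ ^ (2*j+4) + ζ ^ 2) * h2

lemma cheb_ne_zero (F : Type*) [Field F] [Fintype F] [CharP F 2]
    (n : ℕ)
    (hcop : Nat.gcd (n + 1) (Fintype.card F * (Fintype.card F ^ 2 - 1)) = 1)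
    (b : F) : cheb b n ≠ 0 := by
  set q := Fintype.card F with hqdef
  obtain ⟨m, hprime, hq⟩ := FiniteField.card F 2
  have hq2 : 2 ∣ q := by
    rw [hqdef, hq]; exact dvd_pow_self 2 m.ne_zero
  have hc : Nat.Coprime (n + 1) (q * (q ^ 2 - 1)) := hcop
  have h1 : Nat.Coprime (n + 1) q := hc.coprime_dvd_right (dvd_mul_right q _)
  have h2 : Nat.Coprime (n + 1) (q ^ 2 - 1) := hc.coprime_dvd_right (dvd_mul_left _ q)
  have hq1 : 1 < q := Fintype.one_lt_card
  have hnodd : Odd (n + 1) := (h1.coprime_dvd_right hq2).odd_of_right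
  have hneven : Even n := by
    rcases hnodd with ⟨k, hk⟩; exact ⟨k, by omega⟩
  by_cases hb0 : b = 0
  · rw [hb0]
    rw [cheb_zero_even n hneven]; exact one_ne_zero
  intro hch
  -- pass to algebraic closure
  set K := AlgebraicClosure F
  haveI : CharP K 2 := charP_of_injective_algebraMap (algebraMap F K).injective 2
  have h2K : (2 : K) = 0 := by simpa using CharP.cast_eq_zero K 2
  set b' : K := algebraMap F K b with hb'def
  obtain ⟨ζ, hζ⟩ := IsAlgClosed.exists_root
    (Polynomial.C (1:K) * Polynomial.X ^ 2 + Polynomial.C b' * Polynomial.X + Polynomial.C 1)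
    (by rw [Polynomial.degree_quadratic one_ne_zero]; exact two_ne_zero)
  have hzeq : ζ ^ 2 + b' * ζ + 1 = 0 := by
    simpa using hζ
  have hz0 : ζ ≠ 0 := by
    intro h; rw [h] at hzeq; simp at hzeq
  have hb : ζ * b' = ζ ^ 2 + 1 := by linear_combination hzeq - (ζ ^ 2 + 1) * h2K
  -- cheb b' n = 0
  have hch' : cheb b' n = 0 := by
    rw [hb'def, ← cheb_map]; rw [hch]; simp
  have hclosed := cheb_closed ζ b' hb n
  rw [hch'] at hclosed
  have hz1 : ζ ^ (2 * (n + 1)) = 1 := by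
    have : (2 : ℕ) * (n + 1) = 2 * n + 2 := by ring
    rw [this]
    linear_combination -hclosed - h2K
  -- Frobenius: ζ ^ q is also a root
  have hbq : b' ^ q = b' := by
    rw [hb'def, ← map_pow, FiniteField.pow_card]
  have hrhoroot : (ζ ^ q) ^ 2 + b' * (ζ ^ q) + 1 = 0 := by
    have h0 : (ζ ^ 2 + b' * ζ + 1) ^ q = 0 := by
      rw [hzeq]; exact zero_pow (by omega)
    have hqm : q = 2 ^ (m : ℕ) := hqdef.trans hq
    rw [hqm] at h0
    rw [add_pow_char_pow, add_pow_char_pow, mul_pow, one_pow] at h0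
    rw [pow_right_comm] at h0
    rw [← hqm] at h0
    rw [hbq] at h0
    exact h0
  -- b' = ζ + ζ⁻¹ and factor
  have hbval : b' = ζ + ζ⁻¹ := by
    apply mul_left_cancel₀ hz0
    rw [mul_add, mul_inv_cancel₀ hz0]
    linear_combination hb
  have hfac : (ζ ^ q + ζ) * (ζ * ζ ^ q + 1) = 0 := by
    linear_combination ζ * hrhoroot - ζ ^ q * hb
  have hzfin : ζ ^ (q ^ 2 - 1) = 1 := by
    have hfact : q ^ 2 - 1 = (q + 1) * (q - 1) := Nat.sq_sub_sq q 1
    rcases mul_eq_zero.mp hfac with h | h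
    · -- ζ ^ q = ζ, so ζ ^ (q - 1) = 1
      have hq' : ζ ^ q = ζ := by linear_combination h - ζ * h2K
      have hstep : ζ ^ (q - 1) * ζ = 1 * ζ := by
        rw [one_mul, ← pow_succ, Nat.sub_add_cancel hq1.le]; exact hq'
      have h1' : ζ ^ (q - 1) = 1 := mul_right_cancel₀ hz0 hstep
      calc ζ ^ (q ^ 2 - 1) = (ζ ^ (q - 1)) ^ (q + 1) := by
            rw [← pow_mul, hfact, Nat.mul_comm]
        _ = 1 := by rw [h1']; exact one_pow _
    · -- ζ ^ (q + 1) = 1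
      have h1' : ζ ^ (q + 1) = 1 := by
        have : ζ * ζ ^ q = ζ ^ (q + 1) := by rw [pow_succ]; ring
        rw [this] at h
        linear_combination h - h2K
      calc ζ ^ (q ^ 2 - 1) = (ζ ^ (q + 1)) ^ (q - 1) := by rw [← pow_mul, hfact]
        _ = 1 := by rw [h1']; exact one_pow _
  -- gcd argument
  have hqe : Even q := by obtain ⟨c, hc⟩ := hq2; exact ⟨c, by omega⟩
  have hoddq2 : Odd (q ^ 2 - 1) :=
    Nat.Even.sub_odd (by nlinarith) ((Nat.even_pow).mpr ⟨hqe, two_ne_zero⟩) odd_one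
  have hcop2 : Nat.Coprime (2 * (n + 1)) (q ^ 2 - 1) :=
    Nat.Coprime.mul (Nat.coprime_two_left.mpr hoddq2) h2
  have hz1' : ζ = 1 := by
    have := (pow_gcd_eq_one).mpr ⟨hz1, hzfin⟩
    rwa [hcop2, pow_one] at this
  rw [hz1'] at hbval
  simp only [inv_one] at hbval
  have : b' = 0 := by rw [hbval]; linear_combination h2K
  exact hb0 ((map_eq_zero (algebraMap F K)).mp (hb'def ▸ this))

lemma sum_ite_val {F : Type*} [Field F] {n : ℕ} (f : Fin n → F) (c : ℕ) :
    (∑ j : Fin n, if (j : ℕ) = c then f j else 0)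
      = if h : c < n then f ⟨c, h⟩ else 0 := by
  split_ifs with h
  · have key : ∀ j : Fin n, ((j : ℕ) = c) = (j = ⟨c, h⟩) := by
      intro j; rw [Fin.ext_iff]
    simp_rw [key]
    rw [Finset.sum_ite_eq' Finset.univ (⟨c, h⟩ : Fin n) f]
    simp
  · apply Finset.sum_eq_zero
    intro j _
    have := j.2
    rw [if_neg (by omega)]

lemma triToeplitz_kernel {F : Type*} [Field F] [CharP F 2] {n : ℕ} {b : F}
    (hch : cheb b n ≠ 0) {v : Fin n → F}
    (hv : (triToeplitz F n b 1).mulVec v = 0) : v = 0 := by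
  have h2 : (2 : F) = 0 := by simpa using CharP.cast_eq_zero F 2
  set w : ℕ → F := fun j => if h : j < n then v ⟨j, h⟩ else 0 with hw
  have hwv : ∀ i : Fin n, w (i : ℕ) = v i := by
    intro i; rw [hw]; simp [i.2]
  have hrow : ∀ i : Fin n,
      b * w (i : ℕ) + w ((i : ℕ) + 1)
        + (if (i : ℕ) = 0 then 0 else w ((i : ℕ) - 1)) = 0 := by
    intro i
    have hvi := congrFun hv i
    rw [Matrix.mulVec, dotProduct] at hvi
    have hin : (i : ℕ) < n := i.2
    by_cases hi0 : (i : ℕ) = 0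
    · have hsplit : ∀ j : Fin n, triToeplitz F n b 1 i j * v j
          = (if (j : ℕ) = (i : ℕ) then b * v j else 0)
            + (if (j : ℕ) = (i : ℕ) + 1 then v j else 0) := by
        intro j
        show (if (i : ℕ) = (j : ℕ) then b
          else if (i : ℕ) + 1 = (j : ℕ) ∨ (j : ℕ) + 1 = (i : ℕ) then 1 else 0) * v j = _
        split_ifs <;> (first | (exfalso; omega) | ring1)
      rw [Finset.sum_congr rfl fun j _ => hsplit j, Finset.sum_add_distrib,
        sum_ite_val, sum_ite_val] at hvi
      rw [if_pos hi0, add_zero, hwv i]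
      simpa [hw, hin] using hvi
    · have h3 : (i : ℕ) - 1 < n := by omega
      have hsplit : ∀ j : Fin n, triToeplitz F n b 1 i j * v j
          = (if (j : ℕ) = (i : ℕ) then b * v j else 0)
            + (if (j : ℕ) = (i : ℕ) + 1 then v j else 0)
            + (if (j : ℕ) = (i : ℕ) - 1 then v j else 0) := by
        intro j
        show (if (i : ℕ) = (j : ℕ) then b
          else if (i : ℕ) + 1 = (j : ℕ) ∨ (j : ℕ) + 1 = (i : ℕ) then 1 else 0) * v j = _
        split_ifs <;> (first | (exfalso; omega) | ring1)
      rw [Finset.sum_congr rfl fun j _ => hsplit j, Finset.sum_add_distrib,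
        Finset.sum_add_distrib, sum_ite_val, sum_ite_val, sum_ite_val] at hvi
      rw [if_neg hi0, hwv i]
      simpa [hw, hin, h3] using hvi
  have hwn : w n = 0 := by rw [hw]; simp
  have hwj : ∀ j, j ≤ n → w j = w 0 * cheb b j := by
    intro j
    induction j using Nat.strong_induction_on with
    | _ j ih =>
      intro hj
      match j with
      | 0 => simp [cheb]
      | (j+1) =>
        have hjn : j < n := by omega
        have hr := hrow ⟨j, hjn⟩
        simp only [Fin.val_mk] at hr
        rcases Nat.eq_zero_or_pos j with rfl | hjpos
        · rw [if_pos rfl] at hr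
          show w 1 = w 0 * cheb b 1
          rw [show cheb b 1 = b from rfl]
          linear_combination hr - (w 0 * b) * h2
        · obtain ⟨k, rfl⟩ : ∃ k, j = k + 1 := ⟨j - 1, by omega⟩
          rw [if_neg (by omega)] at hr
          norm_num at hr
          have e1 := ih (k + 1) (by omega) (by omega)
          have e0 := ih k (by omega) (by omega)
          show w (k + 2) = w 0 * cheb b (k + 2)
          rw [show cheb b (k + 2) = b * cheb b (k + 1) + cheb b k from rfl]
          linear_combination hr - b * e1 - e0
            - (w 0 * (b * cheb b (k + 1)) + w 0 * cheb b k) * h2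
  have hw0 : w 0 = 0 := by
    have := hwj n le_rfl
    rw [hwn] at this
    rcases mul_eq_zero.mp this.symm with h | h
    · exact h
    · exact absurd h hch
  funext i
  have hv0 := hwj (i : ℕ) i.2.le
  rw [hw0, zero_mul, hwv i] at hv0
  simpa using hv0

/-- `q` even and `gcd(n+1, q(q^2-1)) = 1`: the double Toeplitz code `C_n(a)` is
LCD for every `a`, i.e. `1 + T_n(a)^2` is invertible for all `a`. -/
theorem stmt_10 (F : Type*) [Field F] [Fintype F] [CharP F 2]
    (n : ℕ) (hn : 1 ≤ n)
    (hcop : Nat.gcd (n + 1)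
      (Fintype.card F * (Fintype.card F ^ 2 - 1)) = 1) :
    ∀ a : F,
      IsUnit ((1 : Matrix (Fin n) (Fin n) F) + (triToeplitz F n a 1) ^ 2) := by
  intro a
  set T := triToeplitz F n a 1 with hT
  have hTT : T + T = 0 := by
    ext i j
    exact CharTwo.add_self_eq_zero _
  have hsq : (1 : Matrix (Fin n) (Fin n) F) + T ^ 2 = (1 + T) ^ 2 := by
    have : (1 + T) ^ 2 = 1 + (T + T) + T ^ 2 := by
      noncomm_ring
    rw [this, hTT, add_zero]
  have hone : (1 : Matrix (Fin n) (Fin n) F) + T = triToeplitz F n (a + 1) 1 := by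
    ext i j
    rw [Matrix.add_apply, Matrix.one_apply, hT]
    show _ + (if (i : ℕ) = (j : ℕ) then a
        else if (i : ℕ) + 1 = (j : ℕ) ∨ (j : ℕ) + 1 = (i : ℕ) then 1 else 0)
      = (if (i : ℕ) = (j : ℕ) then a + 1
        else if (i : ℕ) + 1 = (j : ℕ) ∨ (j : ℕ) + 1 = (i : ℕ) then 1 else 0)
    by_cases hij : (i : ℕ) = (j : ℕ)
    · rw [if_pos hij, if_pos hij, if_pos (Fin.ext hij)]
      ring
    · rw [if_neg hij, if_neg hij, if_neg (fun h => hij (congrArg Fin.val h)), zero_add]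
  rw [hsq, hone]
  have hunit : IsUnit (triToeplitz F n (a + 1) 1) := by
    rw [← Matrix.mulVec_injective_iff_isUnit]
    intro x y hxy
    have hker : (triToeplitz F n (a + 1) 1).mulVec (x - y) = 0 := by
      rw [Matrix.mulVec_sub, hxy, sub_self]
    have := triToeplitz_kernel (cheb_ne_zero F n hcop (a + 1)) hker
    exact sub_eq_zero.mp this
  exact hunit.pow 2
end

section
/- Let F_q be a finite field of characteristic 2, a, b ∈ F_q with b ≠ 0, and n ≥ 2 an integer with gcd(n+1, q) = 1. Then n is even, and the code Ĉ_n(a,b) with generator matrix (I_n | T̂_n(a,b)) is LCD — equivalently, the matrix I_n + T̂_n(a,b)² is invertible — if and only if a/b ∉ { −1/b + θ^i + θ^{−i} : 1 ≤ i ≤ n/2 }, where θ is a primitive (n+1)-th root of unity in an algebraic closure of F_q and F_q is identified with its image in the closure. -/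
section Aux

variable {K : Type*} [Field K]

lemma charTwo_add_eq_zero' {R : Type*} [Ring R] [CharP R 2] (a b : R) :
    a + b = 0 ↔ a = b := by
  rw [CharTwo.add_eq_iff_eq_add, zero_add]

lemma tri_det_zero (c b : K) : (triToeplitz K 0 c b).det = 1 := Matrix.det_fin_zero

lemma tri_det_one (c b : K) : (triToeplitz K 1 c b).det = c := by
  rw [Matrix.det_fin_one]; simp [triToeplitz]

lemma tri_sub (m : ℕ) (c b : K) :
    (triToeplitz K (m+1) c b).submatrix Fin.succ Fin.succ = triToeplitz K m c b := by
  ext i j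
  simp only [triToeplitz, Matrix.submatrix_apply, Matrix.of_apply, Fin.val_succ]
  split_ifs <;> first | rfl | omega

lemma tri_det_rec (m : ℕ) (c b : K) :
    (triToeplitz K (m+2) c b).det
      = c * (triToeplitz K (m+1) c b).det - b * b * (triToeplitz K m c b).det := by
  rw [show (m+2) = (m+1).succ from rfl, Matrix.det_succ_column_zero]
  rw [Fin.sum_univ_succ, Fin.sum_univ_succ]
  have h00 : triToeplitz K (m+2) c b 0 0 = c := by simp [triToeplitz]
  have h10 : triToeplitz K (m+2) c b (Fin.succ 0) 0 = b := by
    simp [triToeplitz, Fin.val_succ]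
  have hrest : ∀ i : Fin m, triToeplitz K (m+2) c b i.succ.succ 0 = 0 := by
    intro i
    simp [triToeplitz, Fin.val_succ]
  have hsub0 : (triToeplitz K (m+2) c b).submatrix (Fin.succAbove 0) Fin.succ
      = triToeplitz K (m+1) c b := by
    rw [Fin.succAbove_zero]; exact tri_sub (m+1) c b
  set N := (triToeplitz K (m+2) c b).submatrix (Fin.succAbove (Fin.succ 0)) Fin.succ with hN
  have hNdet : N.det = b * (triToeplitz K m c b).det := by
    rw [Matrix.det_succ_row_zero N, Fin.sum_univ_succ]
    have hN00 : N 0 0 = b := by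
      simp [hN, triToeplitz, Fin.succAbove, Fin.val_succ]
    have hN0rest : ∀ j : Fin m, N 0 j.succ = 0 := by
      intro j
      simp [hN, triToeplitz, Fin.succAbove, Fin.val_succ]
    have hNsub : N.submatrix Fin.succ (Fin.succAbove 0) = triToeplitz K m c b := by
      ext i j
      have : Fin.succAbove (Fin.succ 0) (Fin.succ i) = i.succ.succ := by
        simp [Fin.succAbove, Fin.lt_iff_val_lt_val, Fin.val_succ]
      simp only [hN, Matrix.submatrix_apply, Fin.succAbove_zero, this]
      simp only [triToeplitz, Matrix.of_apply, Fin.val_succ]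
      split_ifs <;> first | rfl | omega
    rw [hN00, hNsub]
    simp only [hN0rest, mul_zero, zero_mul, Finset.sum_const_zero, add_zero]
    simp
  rw [h00, h10, hNdet, hsub0]
  simp only [hrest, mul_zero, zero_mul, Finset.sum_const_zero, add_zero,
    Fin.val_zero, Fin.val_succ, pow_zero, pow_one]
  ring

lemma tri_det_even_zero (b : K) (k : ℕ) :
    (triToeplitz K (2*k) (0:K) b).det = (-(b*b)) ^ k := by
  induction k with
  | zero => simpa using tri_det_zero (0:K) b
  | succ k ih =>
    have : 2*(k+1) = 2*k+2 := by ring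
    rw [this, tri_det_rec (2*k) (0:K) b, ih]
    ring

lemma tri_det_formula [CharP K 2] (c b x : K)
    (hcx : c * x = b * (x * x + 1)) (m : ℕ) :
    x ^ m * (x + 1) ^ 2 * (triToeplitz K m c b).det
      = b ^ m * (x ^ (m + 1) + 1) ^ 2 := by
  have h2 : (2 : K) = 0 := by
    have := CharP.cast_eq_zero K 2; exact_mod_cast this
  set D : ℕ → K := fun m => (triToeplitz K m c b).det with hD
  suffices h : ∀ m : ℕ, (x ^ m * (x + 1) ^ 2 * D m = b ^ m * (x ^ (m + 1) + 1) ^ 2)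
      ∧ (x ^ (m+1) * (x + 1) ^ 2 * D (m+1) = b ^ (m+1) * (x ^ (m + 2) + 1) ^ 2) from (h m).1
  intro m
  induction m with
  | zero =>
    constructor
    · simp only [hD, tri_det_zero, pow_zero]
      ring
    · simp only [hD, Nat.zero_add, tri_det_one, pow_one]
      linear_combination (x + 1)^2 * hcx + (b*x^3 + b*x) * h2
  | succ k ih =>
    refine ⟨ih.2, ?_⟩
    have hrec := tri_det_rec k c b
    have ih1 := ih.2
    have ih0 := ih.1
    simp only [hD] at *
    linear_combination (x^(k+2)*(x+1)^2) * hrec + (c*x) * ih1 - (b*b*x^2) * ih0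
      + (b*b^k*(x^2*x^k+1)^2) * hcx + (b^2*b^k*(x^4*x^k - 2*x^3*x^k + x^2*x^k)) * h2

/-- The core determinant vanishing criterion. -/
lemma tri_det_eq_zero_iff (K : Type*) [Field K] [IsAlgClosed K] [CharP K 2]
    (n : ℕ) (hne : Even n) (c B : K) (hB : B ≠ 0)
    (θ : K) (hθ : IsPrimitiveRoot θ (n+1)) :
    (triToeplitz K n c B).det = 0 ↔
      ∃ i : ℕ, 1 ≤ i ∧ i ≤ n / 2 ∧ c = B * (θ ^ i + θ⁻¹ ^ i) := by
  have h2 : (2 : K) = 0 := by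
    have := CharP.cast_eq_zero K 2; exact_mod_cast this
  haveI : NeZero (n+1) := ⟨Nat.succ_ne_zero n⟩
  -- choose a root x of X² + (c/B) X + 1
  obtain ⟨x, hx⟩ := IsAlgClosed.exists_root
      (Polynomial.X^2 + Polynomial.C (c/B) * Polynomial.X + 1)
      (by
        have hdeg : (Polynomial.X^2 + Polynomial.C (c/B) * Polynomial.X
            + 1 : Polynomial K).degree = 2 := by
          compute_degree!
        rw [hdeg]; exact two_ne_zero)
  have hroot : x^2 + (c/B)*x + 1 = 0 := by
    simpa using hx
  have hx0 : x ≠ 0 := by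
    rintro rfl
    simp at hroot
  have hcx : c * x = B * (x * x + 1) := by
    have hB' : B ≠ 0 := hB
    field_simp at hroot
    linear_combination hroot - (B*x*x + B) * h2
  by_cases hx1 : x = 1
  · -- then c = 0 and the determinant is nonzero; the RHS is false as well
    subst hx1
    have hc0 : c = 0 := by
      have : c * 1 = B * 2 := by rw [hcx]; ring
      rw [h2, mul_zero, mul_one] at this
      exact this
    subst hc0
    obtain ⟨k, hk⟩ := hne
    have hdet : (triToeplitz K n (0:K) B).det = (-(B*B))^k := by
      rw [show n = 2*k by omega]
      exact tri_det_even_zero B k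
    constructor
    · intro h
      exfalso
      rw [hdet] at h
      exact (pow_ne_zero k (neg_ne_zero.mpr (mul_ne_zero hB hB))) h
    · rintro ⟨i, hi1, hi2, hi⟩
      exfalso
      have hsum : θ ^ i + θ⁻¹ ^ i = 0 := by
        rcases mul_eq_zero.mp hi.symm with h | h
        · exact absurd h hB
        · exact h
      have hth : θ ^ (2*i) = 1 := by
        have hpow : θ ^ i ≠ 0 := pow_ne_zero _ (hθ.ne_zero (Nat.succ_ne_zero n))
        have heq : θ ^ i = θ⁻¹ ^ i := (charTwo_add_eq_zero' _ _).mp hsum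
        have : θ ^ i * θ ^ i = 1 := by
          nth_rewrite 2 [heq]
          rw [inv_pow]
          exact mul_inv_cancel₀ hpow
        rw [two_mul, pow_add]
        exact this
      have hdvd := (hθ.pow_eq_one_iff_dvd (2*i)).mp hth
      have : n + 1 ≤ 2*i := Nat.le_of_dvd (by omega) hdvd
      omega
  · -- x ≠ 1 : det = 0 ↔ x^(n+1) = 1
    have hx1' : x + 1 ≠ 0 := by
      intro h
      apply hx1
      exact (charTwo_add_eq_zero' x 1).mp h
    have key := tri_det_formula c B x hcx n
    have hiff : (triToeplitz K n c B).det = 0 ↔ x ^ (n+1) = 1 := by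
      constructor
      · intro h
        rw [h, mul_zero] at key
        have := key.symm
        have hsq : (x ^ (n+1) + 1)^2 = 0 := by
          have hBn : (B:K)^n ≠ 0 := pow_ne_zero _ hB
          rcases mul_eq_zero.mp this with h' | h'
          · exact absurd h' hBn
          · exact h'
        have h0 := pow_eq_zero_iff (two_ne_zero) |>.mp hsq
        exact (charTwo_add_eq_zero' _ _).mp h0
      · intro h
        have : (x ^ (n+1) + 1 : K) = 0 := by
          rw [h]; exact (charTwo_add_eq_zero' _ _).mpr rfl
        rw [this] at key
        have : x ^ n * (x + 1) ^ 2 * (triToeplitz K n c B).det = 0 := by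
          rw [key]; ring
        rcases mul_eq_zero.mp this with h' | h'
        · exfalso
          rcases mul_eq_zero.mp h' with h'' | h''
          · exact pow_ne_zero _ hx0 h''
          · exact pow_ne_zero _ hx1' h''
        · exact h'
    rw [hiff]
    have hcB : c = B * (x + x⁻¹) := by
      have h1 : c = c * x * x⁻¹ := by field_simp
      rw [h1, hcx]
      field_simp
    constructor
    · intro h
      obtain ⟨i, hin, hix⟩ := hθ.eq_pow_of_pow_eq_one h
      have hi0 : i ≠ 0 := by
        rintro rfl
        simp at hix
        exact hx1 hix.symm
      have hxinv : θ⁻¹ ^ i = x⁻¹ := by rw [inv_pow, hix]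
      by_cases hile : i ≤ n / 2
      · exact ⟨i, Nat.one_le_iff_ne_zero.mpr hi0, hile, by rw [hix, hxinv, hcB]⟩
      · refine ⟨n + 1 - i, by omega, ?_, ?_⟩
        · obtain ⟨k, hk⟩ := hne; omega
        · have hji : θ ^ (n + 1 - i) * θ ^ i = 1 := by
            rw [← pow_add]
            have : n + 1 - i + i = n + 1 := by omega
            rw [this]
            exact hθ.pow_eq_one
          have hj : θ ^ (n + 1 - i) = x⁻¹ := by
            rw [hix] at hji
            field_simp at hji ⊢
            linear_combination hji
          have hj' : θ⁻¹ ^ (n + 1 - i) = x := by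
            rw [inv_pow, hj, inv_inv]
          rw [hj, hj', hcB]
          ring
    · rintro ⟨i, hi1, hi2, hc⟩
      set y := θ ^ i with hy
      have hy0 : y ≠ 0 := pow_ne_zero _ (hθ.ne_zero (Nat.succ_ne_zero n))
      have hyy : y * y⁻¹ = 1 := mul_inv_cancel₀ hy0
      have hc' : c = B * (y + y⁻¹) := by rw [hc, inv_pow]
      have h1 : (y + y⁻¹) * x = x * x + 1 := by
        have h0 : B * ((y + y⁻¹) * x) = B * (x * x + 1) := by
          rw [← mul_assoc, ← hc']; exact hcx
        exact mul_left_cancel₀ hB h0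
      have hfac : (x + y) * (x + y⁻¹) = 0 := by
        linear_combination h1 + hyy + (x^2 + 1) * h2
      have hyn : y ^ (n + 1) = 1 := by
        rw [hy, ← pow_mul, mul_comm, pow_mul, hθ.pow_eq_one, one_pow]
      rcases mul_eq_zero.mp hfac with h' | h'
      · rw [(charTwo_add_eq_zero' _ _).mp h', hyn]
      · rw [(charTwo_add_eq_zero' _ _).mp h', inv_pow, hyn, inv_one]

end Aux

lemma tri_map {F K : Type*} [Field F] [Field K] (φ : F →+* K) (n : ℕ) (c b : F) :
    (triToeplitz F n c b).map φ = triToeplitz K n (φ c) (φ b) := by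
  ext i j
  simp only [triToeplitz, Matrix.map_apply, Matrix.of_apply, apply_ite φ, map_zero]

lemma main_iff {F : Type*} [Field F] [CharP F 2] (K : Type*) [Field K] [IsAlgClosed K]
    [CharP K 2] [Algebra F K] (n : ℕ) (heven : Even n) (a b : F) (hb : b ≠ 0)
    (θ : K) (hθ : IsPrimitiveRoot θ (n + 1)) :
    IsUnit ((1 : Matrix (Fin n) (Fin n) F) + (triToeplitz F n a b) ^ 2) ↔
      algebraMap F K (a / b) ∉
        (fun i : ℕ => -(algebraMap F K b)⁻¹ + θ ^ i + θ⁻¹ ^ i) '' (Set.Icc 1 (n / 2)) := by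
  have hφinj : Function.Injective (algebraMap F K) := (algebraMap F K).injective
  set φ := algebraMap F K with hφ
  set T := triToeplitz F n a b with hTdef
  have hTT : T + T = 0 := by
    ext i j
    simp only [Matrix.add_apply, Matrix.zero_apply, CharTwo.add_self_eq_zero]
  have hsq : (1 : Matrix (Fin n) (Fin n) F) + T ^ 2 = (1 + T) ^ 2 := by
    have : (1 + T) ^ 2 = 1 + (T + T) + T ^ 2 := by noncomm_ring
    rw [this, hTT, add_zero]
  have hT1 : (1 : Matrix (Fin n) (Fin n) F) + T = triToeplitz F n (1 + a) b := by
    ext i j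
    by_cases h : (i : ℕ) = (j : ℕ)
    · have hij : i = j := Fin.ext h
      subst hij
      simp [triToeplitz, Matrix.one_apply, hTdef]
    · have hij : i ≠ j := fun e => h (by rw [e])
      simp [triToeplitz, Matrix.add_apply, Matrix.one_apply_ne hij, h, hTdef]
  rw [hsq, hT1, Matrix.isUnit_iff_isUnit_det, Matrix.det_pow,
    isUnit_pow_iff two_ne_zero, isUnit_iff_ne_zero]
  have hdetmap : φ (triToeplitz F n (1 + a) b).det
      = (triToeplitz K n (1 + φ a) (φ b)).det := by
    rw [RingHom.map_det, RingHom.mapMatrix_apply, tri_map]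
    simp
  have hdet_iff : (triToeplitz F n (1 + a) b).det ≠ 0 ↔
      (triToeplitz K n (1 + φ a) (φ b)).det ≠ 0 := by
    rw [← hdetmap]
    constructor
    · intro h h0
      exact h (hφinj (by rw [h0, map_zero]))
    · intro h h0
      exact h (by rw [h0, map_zero])
  rw [hdet_iff]
  have hB : φ b ≠ 0 := fun h0 => hb (hφinj (by rw [h0, map_zero]))
  have hcore := tri_det_eq_zero_iff K n heven (1 + φ a) (φ b) hB θ hθ
  have h2K : (2 : K) = 0 := by
    have := CharP.cast_eq_zero K 2; exact_mod_cast this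
  have hBB : φ b * (φ b)⁻¹ = 1 := mul_inv_cancel₀ hB
  have hcond : ∀ s : K, (φ (a / b) = -(φ b)⁻¹ + s) ↔ (1 + φ a = φ b * s) := by
    intro s
    rw [map_div₀]
    constructor
    · intro h
      linear_combination (φ b) * h + (φ a + 1) * hBB
        + ((1 + φ a) - (1 + φ a) * (φ b * (φ b)⁻¹)) * h2K
    · intro h
      linear_combination (φ b)⁻¹ * h + s * hBB
  constructor
  · intro hne hmem
    obtain ⟨i, hi, heq⟩ := hmem
    rw [Set.mem_Icc] at hi
    have heq' : φ (a / b) = -(φ b)⁻¹ + (θ ^ i + θ⁻¹ ^ i) := by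
      rw [← heq]; ring
    exact hne (hcore.mpr ⟨i, hi.1, hi.2, (hcond _).mp heq'⟩)
  · intro hmem h0
    obtain ⟨i, hi1, hi2, hceq⟩ := hcore.mp h0
    refine hmem ⟨i, Set.mem_Icc.mpr ⟨hi1, hi2⟩, ?_⟩
    have h1 := ((hcond _).mpr hceq).symm
    show -(φ b)⁻¹ + θ ^ i + θ⁻¹ ^ i = φ (a / b)
    rw [← h1]; ring

/-- Characteristic 2, `b ≠ 0`, `gcd(n+1,q)=1`: `n` is even and the code
`Ĉ_n(a,b)` with generator matrix `(I | T̂_n(a,b))` is LCD (equivalently,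
`1 + T̂_n(a,b)^2` is invertible) iff
`a/b ∉ {-1/b + θ^i + θ^{-i} : 1 ≤ i ≤ n/2}`. -/
theorem stmt_14 (F : Type*) [Field F] [Fintype F] [CharP F 2]
    (n : ℕ) (hn : 2 ≤ n) (hcop : Nat.gcd (n + 1) (Fintype.card F) = 1)
    (a b : F) (hb : b ≠ 0)
    (θ : AlgebraicClosure F) (hθ : IsPrimitiveRoot θ (n + 1)) :
    Even n ∧
    (IsUnit ((1 : Matrix (Fin n) (Fin n) F) + (triToeplitz F n a b) ^ 2) ↔
      algebraMap F (AlgebraicClosure F) (a / b) ∉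
        (fun i : ℕ => -(algebraMap F (AlgebraicClosure F) b)⁻¹ + θ ^ i + θ⁻¹ ^ i) ''
          (Set.Icc 1 (n / 2))) := by
  have heven : Even n := by
    by_contra hodd
    have h2n : 2 ∣ n + 1 := by
      rcases Nat.even_or_odd n with h | h
      · exact absurd h hodd
      · obtain ⟨k, rfl⟩ := h
        exact ⟨k + 1, by ring⟩
    obtain ⟨k, hp, hc⟩ := FiniteField.card F 2
    have h2q : 2 ∣ Fintype.card F := by
      rw [hc]
      exact dvd_pow_self 2 k.pos.ne'
    have hd := Nat.dvd_gcd h2n h2q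
    rw [hcop] at hd
    norm_num at hd
  exact ⟨heven, main_iff (AlgebraicClosure F) n heven a b hb θ hθ⟩
end

section
/- Let F_q be a finite field of odd characteristic, a, b ∈ F_q with b ≠ 0, and n ≥ 2 an integer with gcd(n+1, q) = 1. Then the code Ĉ_n(a,b) with generator matrix (I_n | T̂_n(a,b)) is LCD — equivalently, the matrix I_n + T̂_n(a,b)² is invertible — if and only if a/b ∉ { −μ/b + θ^i + θ^{−i} : 1 ≤ i ≤ n } ∪ { μ/b + θ^i + θ^{−i} : 1 ≤ i ≤ n }, where μ is an element of an algebraic closure of F_q with μ² = −1, θ is a primitive 2(n+1)-th root of unity in that closure, and F_q is identified with its image in the closure. -/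
open Polynomial Matrix Finset

section Aux
variable {K : Type*} [Field K]

def Vv (θ : K) (k m : ℕ) : K := θ ^ (k * m) - θ⁻¹ ^ (k * m)

lemma Vv_rec (θ : K) (hθ0 : θ ≠ 0) (k m : ℕ) :
    Vv θ k m + Vv θ k (m + 2) = (θ ^ k + θ⁻¹ ^ k) * Vv θ k (m + 1) := by
  have hxy : (θ ^ k) * (θ⁻¹ ^ k) = 1 := by
    rw [inv_pow, mul_inv_cancel₀ (pow_ne_zero _ hθ0)]
  simp only [Vv, show k * (m+2) = k*m + k + k by ring,
    show k * (m+1) = k*m + k by ring, pow_add]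
  linear_combination ((θ⁻¹ ^ (k*m)) - (θ ^ (k*m))) * hxy

lemma Vv_zero (θ : K) (k : ℕ) : Vv θ k 0 = 0 := by simp [Vv]

lemma Vv_boundary {θ : K} {n : ℕ} (hθn : θ ^ (n+1) = -1) (k : ℕ) : Vv θ k (n+1) = 0 := by
  simp only [Vv, mul_comm k (n+1), pow_mul, inv_pow, hθn]
  rw [← inv_pow, inv_neg, inv_one, sub_self]

lemma mulVec_tri {n : ℕ} (a b θ : K) (hθ0 : θ ≠ 0) (hθn : θ ^ (n+1) = -1) (k : ℕ)
    (i : Fin n) :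
    ((triToeplitz K n a b).mulVec (fun j => Vv θ k ((j : ℕ) + 1))) i
      = (a + b * (θ ^ k + θ⁻¹ ^ k)) * Vv θ k ((i : ℕ) + 1) := by
  have split : ∀ j : Fin n, triToeplitz K n a b i j * Vv θ k ((j:ℕ)+1)
      = (if (j:ℕ) = (i:ℕ) then a * Vv θ k ((j:ℕ)+1) else 0)
      + ((if (j:ℕ) = (i:ℕ)+1 then b * Vv θ k ((j:ℕ)+1) else 0)
      + (if (j:ℕ)+1 = (i:ℕ) then b * Vv θ k ((j:ℕ)+1) else 0)) := by
    intro j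
    simp only [triToeplitz, Matrix.of_apply]
    split_ifs <;> first | omega | ring
  show ∑ j, triToeplitz K n a b i j * Vv θ k ((j:ℕ)+1) = _
  rw [Finset.sum_congr rfl (fun j _ => split j), Finset.sum_add_distrib,
    Finset.sum_add_distrib]
  have s1 : ∑ j : Fin n, (if (j:ℕ) = (i:ℕ) then a * Vv θ k ((j:ℕ)+1) else 0)
      = a * Vv θ k ((i:ℕ)+1) := by
    rw [Finset.sum_eq_single i]
    · simp
    · intro j _ hj; rw [if_neg (fun h => hj (Fin.ext h))]
    · intro h; exact absurd (Finset.mem_univ i) h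
  have s2 : ∑ j : Fin n, (if (j:ℕ) = (i:ℕ)+1 then b * Vv θ k ((j:ℕ)+1) else 0)
      = b * Vv θ k ((i:ℕ)+2) := by
    by_cases h : (i:ℕ)+1 < n
    · rw [Finset.sum_eq_single (⟨(i:ℕ)+1, h⟩ : Fin n)]
      · simp
      · intro j _ hj
        rw [if_neg (fun hc => hj (Fin.ext (by simpa using hc)))]
      · intro h; exact absurd (Finset.mem_univ _) h
    · have hi : (i:ℕ)+1 = n := by have := i.isLt; omega
      rw [show (i:ℕ)+2 = n+1 by omega, Vv_boundary hθn, mul_zero]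
      apply Finset.sum_eq_zero
      intro j _
      rw [if_neg]
      have := j.isLt; omega
  have s3 : ∑ j : Fin n, (if (j:ℕ)+1 = (i:ℕ) then b * Vv θ k ((j:ℕ)+1) else 0)
      = b * Vv θ k (i:ℕ) := by
    by_cases h : 0 < (i:ℕ)
    · rw [Finset.sum_eq_single (⟨(i:ℕ)-1, by have := i.isLt; omega⟩ : Fin n)]
      · rw [if_pos (by simp; omega)]
        congr 2
        simp; omega
      · intro j _ hj
        rw [if_neg (fun hc => hj (Fin.ext (by simp; omega)))]
      · intro h; exact absurd (Finset.mem_univ _) h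
    · have hi : (i:ℕ) = 0 := by omega
      rw [hi, Vv_zero, mul_zero]
      apply Finset.sum_eq_zero
      intro j _
      rw [if_neg]
      omega
  rw [s1, s2, s3]
  have hrec := Vv_rec θ hθ0 k (i : ℕ)
  linear_combination b * hrec

lemma cp_eval {n : ℕ} (M : Matrix (Fin n) (Fin n) K) (c : K) :
    (M.charpoly).eval c = (Matrix.scalar (Fin n) c - M).det := by
  rw [Matrix.charpoly, _root_.eval_det, matPolyEquiv_charmatrix,
    Polynomial.eval_sub, Polynomial.eval_X, Polynomial.eval_C]

lemma isRoot_lam {n : ℕ} (a b θ : K) (hθ : IsPrimitiveRoot θ (2*(n+1)))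
    {k : ℕ} (hk1 : 1 ≤ k) (hk2 : k ≤ n) :
    ((triToeplitz K n a b).charpoly).IsRoot (a + b * (θ ^ k + θ⁻¹ ^ k)) := by
  have hθ0 : θ ≠ 0 := hθ.ne_zero (by omega)
  have hθn : θ ^ (n+1) = -1 := by
    have h2 : (θ ^ (n+1)) * (θ ^ (n+1)) = 1 := by
      rw [← pow_add, show (n+1) + (n+1) = 2*(n+1) by ring, hθ.pow_eq_one]
    rcases mul_self_eq_one_iff.mp h2 with h | h
    · exact absurd h (hθ.pow_ne_one_of_pos_of_lt (by omega) (by omega))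
    · exact h
  set lam := a + b * (θ ^ k + θ⁻¹ ^ k) with hlam
  have hn : 0 < n := by omega
  set v : Fin n → K := fun j => Vv θ k ((j : ℕ) + 1) with hv
  have hvne : v ≠ 0 := by
    intro h
    have h0 : v ⟨0, hn⟩ = 0 := by rw [h]; rfl
    have : θ ^ k - θ⁻¹ ^ k = 0 := by simpa [hv, Vv] using h0
    have heq : θ ^ (2*k) = 1 := by
      have : θ ^ k = θ⁻¹ ^ k := sub_eq_zero.mp this
      rw [show 2*k = k + k by ring, pow_add]
      nth_rewrite 2 [this]
      rw [inv_pow, mul_inv_cancel₀ (pow_ne_zero _ hθ0)]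
    have := Nat.le_of_dvd (by omega) ((hθ.pow_eq_one_iff_dvd _).mp heq)
    omega
  have hmv : (Matrix.scalar (Fin n) lam - triToeplitz K n a b).mulVec v = 0 := by
    funext i
    have h1 : ((Matrix.scalar (Fin n) lam).mulVec v) i = lam * v i := by
      simp [Matrix.scalar, Matrix.mulVec_diagonal]
    simp only [Matrix.sub_mulVec, Pi.sub_apply, Pi.zero_apply, h1,
      mulVec_tri a b θ hθ0 hθn k i]
    rw [hv]
    rw [mulVec_tri a b θ hθ0 hθn k i, hlam]
    ring
  have hdet : (Matrix.scalar (Fin n) lam - triToeplitz K n a b).det = 0 := by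
    rw [← Matrix.exists_mulVec_eq_zero_iff]
    exact ⟨v, hvne, hmv⟩
  rw [Polynomial.IsRoot, cp_eval, hdet]

lemma lam_inj {n : ℕ} (a b θ : K) (hb : b ≠ 0) (hθ : IsPrimitiveRoot θ (2*(n+1)))
    {j k : ℕ} (hj1 : 1 ≤ j) (hj2 : j ≤ n) (hk1 : 1 ≤ k) (hk2 : k ≤ n)
    (h : a + b * (θ ^ j + θ⁻¹ ^ j) = a + b * (θ ^ k + θ⁻¹ ^ k)) : j = k := by
  have hθ0 : θ ≠ 0 := hθ.ne_zero (by omega)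
  have h' : θ ^ j + (θ ^ j)⁻¹ = θ ^ k + (θ ^ k)⁻¹ := by
    have := mul_left_cancel₀ hb (by linear_combination h :
      b * (θ ^ j + θ⁻¹ ^ j) = b * (θ ^ k + θ⁻¹ ^ k))
    simpa [inv_pow] using this
  set x := θ ^ j with hxd
  set y := θ ^ k with hyd
  have hx : x ≠ 0 := pow_ne_zero _ hθ0
  have hy : y ≠ 0 := pow_ne_zero _ hθ0
  have hx' : x * x⁻¹ = 1 := mul_inv_cancel₀ hx
  have hy' : y * y⁻¹ = 1 := mul_inv_cancel₀ hy
  have key : (x - y) * (x * y - 1) = 0 := by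
    linear_combination x * y * h' - y * hx' + x * hy'
  rcases mul_eq_zero.mp key with h0 | h0
  · have hxy : θ ^ j = θ ^ k := sub_eq_zero.mp h0
    exact hθ.pow_inj (by omega) (by omega) hxy
  · have hxy : θ ^ (j + k) = 1 := by rw [pow_add]; exact sub_eq_zero.mp h0
    have := Nat.le_of_dvd (by omega) ((hθ.pow_eq_one_iff_dvd _).mp hxy)
    omega

lemma charpoly_tri {n : ℕ} (a b θ : K) (hb : b ≠ 0)
    (hθ : IsPrimitiveRoot θ (2*(n+1))) :
    (triToeplitz K n a b).charpoly
      = ∏ k ∈ Finset.Icc 1 n, (X - C (a + b * (θ ^ k + θ⁻¹ ^ k))) := by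
  set lam : ℕ → K := fun k => a + b * (θ ^ k + θ⁻¹ ^ k) with hlam
  set p := (triToeplitz K n a b).charpoly with hp
  have hpm : p.Monic := Matrix.charpoly_monic _
  have hp0 : p ≠ 0 := hpm.ne_zero
  set s : Multiset K := (Finset.Icc 1 n).val.map lam with hs
  have hnodup : s.Nodup := Multiset.Nodup.map_on
    (fun j hj k hk h => by
      simp only [Finset.mem_val, Finset.mem_Icc] at hj hk
      exact lam_inj a b θ hb hθ hj.1 hj.2 hk.1 hk.2 h)
    (Finset.Icc 1 n).nodup
  have hsub : s ≤ p.roots := by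
    rw [Multiset.le_iff_subset hnodup]
    intro x hx
    simp only [hs, Multiset.mem_map, Finset.mem_val, Finset.mem_Icc] at hx
    obtain ⟨k, ⟨hk1, hk2⟩, rfl⟩ := hx
    rw [Polynomial.mem_roots hp0]
    exact isRoot_lam a b θ hθ hk1 hk2
  have hdvd : (s.map (fun c => X - C c)).prod ∣ p :=
    (Multiset.prod_X_sub_C_dvd_iff_le_roots hp0 s).mpr hsub
  have hq : ∏ k ∈ Finset.Icc 1 n, (X - C (lam k)) = (s.map (fun c => X - C c)).prod := by
    rw [hs, Multiset.map_map, ← Finset.prod_map_val]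
    rfl
  set q := ∏ k ∈ Finset.Icc 1 n, (X - C (lam k)) with hqd
  have hqm : q.Monic := monic_prod_of_monic _ _ (fun k _ => monic_X_sub_C _)
  have hqdeg : q.natDegree = n := by
    rw [hqd, Polynomial.natDegree_prod _ _ (fun k _ => X_sub_C_ne_zero _)]
    simp [Nat.card_Icc]
  have hpdeg : p.natDegree = n := by
    rw [hp, Matrix.charpoly_natDegree_eq_dim]
    simp
  obtain ⟨r, hr⟩ : q ∣ p := hq ▸ hdvd
  have hr0 : r ≠ 0 := by rintro rfl; rw [mul_zero] at hr; exact hp0 hr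
  have hdeg : p.natDegree = q.natDegree + r.natDegree := by
    rw [hr, Polynomial.natDegree_mul hqm.ne_zero hr0]
  have hrm : r.Monic := by
    have : p.leadingCoeff = q.leadingCoeff * r.leadingCoeff := by
      rw [hr, Polynomial.leadingCoeff_mul]
    rw [hpm.leadingCoeff, hqm.leadingCoeff, one_mul] at this
    exact this.symm
  have : r = 1 := hrm.natDegree_eq_zero.mp (by omega)
  rw [hr, this, mul_one]

end Aux

/-- Odd characteristic, `b ≠ 0`, `gcd(n+1,q)=1`: the code `Ĉ_n(a,b)` is LCD
(equivalently, `1 + T̂_n(a,b)^2` is invertible) iff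
`a/b ∉ {-μ/b + θ^i + θ^{-i}} ∪ {μ/b + θ^i + θ^{-i}}`, `1 ≤ i ≤ n`. -/
theorem stmt_15 (F : Type*) [Field F] [Fintype F]
    (p : ℕ) [Fact p.Prime] [CharP F p] (hp : Odd p)
    (n : ℕ) (hn : 2 ≤ n) (hcop : Nat.gcd (n + 1) (Fintype.card F) = 1)
    (a b : F) (hb : b ≠ 0)
    (μ : AlgebraicClosure F) (hμ : μ ^ 2 = -1)
    (θ : AlgebraicClosure F) (hθ : IsPrimitiveRoot θ (2 * (n + 1))) :
    IsUnit ((1 : Matrix (Fin n) (Fin n) F) + (triToeplitz F n a b) ^ 2) ↔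
      algebraMap F (AlgebraicClosure F) (a / b) ∉
        ((fun i : ℕ => -μ / algebraMap F (AlgebraicClosure F) b + θ ^ i + θ⁻¹ ^ i) ''
            (Set.Icc 1 n) ∪
         (fun i : ℕ => μ / algebraMap F (AlgebraicClosure F) b + θ ^ i + θ⁻¹ ^ i) ''
            (Set.Icc 1 n)) := by
  classical
  let K := AlgebraicClosure F
  let φ : F →+* K := algebraMap F K
  have hφinj : Function.Injective φ := φ.injective
  let a' : K := φ a
  let b' : K := φ b
  have hb' : b' ≠ 0 := fun h => hb (hφinj (by rw [map_zero]; exact h))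
  let T := triToeplitz F n a b
  let M := triToeplitz K n a' b'
  have hT : T = triToeplitz F n a b := rfl
  have hM : M = triToeplitz K n a' b' := rfl
  have ha' : a' = φ a := rfl
  have hb'def : b' = φ b := rfl
  have hθ0 : θ ≠ 0 := hθ.ne_zero (by omega)
  have hθn : θ ^ (n+1) = -1 := by
    have h2 : (θ ^ (n+1)) * (θ ^ (n+1)) = 1 := by
      rw [← pow_add, show (n+1) + (n+1) = 2*(n+1) by ring, hθ.pow_eq_one]
    rcases mul_self_eq_one_iff.mp h2 with h | h
    · exact absurd h (hθ.pow_ne_one_of_pos_of_lt (by omega) (by omega))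
    · exact h
  let lam : ℕ → K := fun k => a' + b' * (θ ^ k + θ⁻¹ ^ k)
  have hlam : lam = fun k => a' + b' * (θ ^ k + θ⁻¹ ^ k) := rfl
  -- step 1 : transport to K
  have hTmap : T.map φ = M := by
    ext i j
    simp only [hT, hM, triToeplitz, Matrix.map_apply, Matrix.of_apply]
    split_ifs <;> simp [ha', hb'def]
  have hmap1 : ((1 : Matrix (Fin n) (Fin n) F) + T ^ 2).map φ
      = (1 : Matrix (Fin n) (Fin n) K) + M ^ 2 := by
    calc ((1 : Matrix (Fin n) (Fin n) F) + T ^ 2).map ⇑φ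
        = (RingHom.mapMatrix φ) (1 + T ^ 2) := rfl
      _ = 1 + ((RingHom.mapMatrix φ) T) ^ 2 := by rw [map_add, _root_.map_one, map_pow]
      _ = 1 + M ^ 2 := by rw [RingHom.mapMatrix_apply, hTmap]
  have step1 : IsUnit ((1 : Matrix (Fin n) (Fin n) F) + T ^ 2)
      ↔ ((1 : Matrix (Fin n) (Fin n) K) + M ^ 2).det ≠ 0 := by
    rw [Matrix.isUnit_iff_isUnit_det, isUnit_iff_ne_zero, ← hmap1, ← RingHom.mapMatrix_apply, ← RingHom.map_det]
    exact (map_ne_zero_iff φ hφinj).symm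
  -- step 2 : factor 1 + M^2
  have hsc : ∀ c : K, Matrix.scalar (Fin n) c = c • (1 : Matrix (Fin n) (Fin n) K) := by
    intro c
    ext i j
    by_cases h : i = j <;>
      simp [Matrix.scalar_apply, Matrix.one_apply, Matrix.diagonal, h]
  have hμμ : μ * -μ = 1 := by linear_combination -hμ
  have key : (Matrix.scalar (Fin n) μ - M) * (Matrix.scalar (Fin n) (-μ) - M)
      = (1 : Matrix (Fin n) (Fin n) K) + M ^ 2 := by
    have hμ2 : μ * μ = -1 := by linear_combination hμ
    rw [hsc, hsc]
    simp only [sub_mul, mul_sub, smul_mul_assoc, mul_smul_comm, one_mul, mul_one,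
      smul_smul, neg_smul, smul_neg, neg_neg, hμ2, neg_one_smul, pow_two]
    simp only [mul_smul_comm, mul_one, smul_smul, neg_mul, mul_neg, neg_neg, one_smul,
      neg_smul, smul_neg, one_mul, hμ2, neg_one_smul]
    abel
  -- step 3 : determinant as product
  have hdet : ((1 : Matrix (Fin n) (Fin n) K) + M ^ 2).det
      = (∏ k ∈ Finset.Icc 1 n, (μ - lam k)) * ∏ k ∈ Finset.Icc 1 n, (-μ - lam k) := by
    rw [← key, Matrix.det_mul, ← cp_eval, ← cp_eval, hM, charpoly_tri a' b' θ hb' hθ,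
      Polynomial.eval_prod, Polynomial.eval_prod]
    simp [hlam]
  -- step 4 : nonvanishing iff
  have step4 : ((1 : Matrix (Fin n) (Fin n) K) + M ^ 2).det ≠ 0
      ↔ (∀ k ∈ Finset.Icc 1 n, μ ≠ lam k) ∧ (∀ k ∈ Finset.Icc 1 n, -μ ≠ lam k) := by
    rw [hdet, mul_ne_zero_iff, Finset.prod_ne_zero_iff, Finset.prod_ne_zero_iff]
    constructor
    · rintro ⟨h1, h2⟩
      exact ⟨fun k hk h => h1 k hk (by rw [h, sub_self]),
             fun k hk h => h2 k hk (by rw [h, sub_self])⟩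
    · rintro ⟨h1, h2⟩
      exact ⟨fun k hk h => (h1 k hk (sub_eq_zero.mp h)).elim,
             fun k hk h => (h2 k hk (sub_eq_zero.mp h)).elim⟩
  -- step 5 : flip identity
  have hflip : ∀ i : ℕ, 1 ≤ i → i ≤ n →
      θ ^ (n+1-i) + θ⁻¹ ^ (n+1-i) = -(θ ^ i + θ⁻¹ ^ i) := by
    intro i h1 h2
    have hθi : θ ^ i ≠ 0 := pow_ne_zero _ hθ0
    have hmul : θ ^ (n+1-i) * θ ^ i = -1 := by
      rw [← pow_add, Nat.sub_add_cancel (by omega), hθn]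
    have e1 : θ ^ (n+1-i) = -θ⁻¹ ^ i := by
      rw [inv_pow]
      calc θ ^ (n+1-i) = (θ ^ (n+1-i) * θ ^ i) * (θ ^ i)⁻¹ := by field_simp
        _ = -(θ ^ i)⁻¹ := by rw [hmul]; ring
    have e2 : θ⁻¹ ^ (n+1-i) = -θ ^ i := by
      rw [inv_pow, e1]
      simp [inv_neg, inv_pow]
    rw [e1, e2]; ring
  -- step 6 : membership translation
  have hmemiff : ∀ c : K,
      (φ (a/b) ∈ (fun i : ℕ => c / b' + θ ^ i + θ⁻¹ ^ i) '' Set.Icc 1 n)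
        ↔ ∃ k ∈ Finset.Icc 1 n, c = lam k := by
    intro c
    have hab : φ (a/b) = a' / b' := by rw [map_div₀]
    constructor
    · rintro ⟨i, hi, hfi⟩
      simp only [Set.mem_Icc] at hi
      refine ⟨n+1-i, Finset.mem_Icc.mpr ⟨by omega, by omega⟩, ?_⟩
      rw [hlam]
      dsimp only
      rw [hflip i hi.1 hi.2]
      dsimp only at hfi
      rw [hab] at hfi
      have hbinv : b' * b'⁻¹ = 1 := mul_inv_cancel₀ hb'
      linear_combination b' * hfi + (a' - c) * hbinv
    · rintro ⟨k, hk, rfl⟩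
      simp only [Finset.mem_Icc] at hk
      refine ⟨n+1-k, Set.mem_Icc.mpr ⟨by omega, by omega⟩, ?_⟩
      have e := hflip k hk.1 hk.2
      dsimp only
      rw [hab, hlam]
      dsimp only
      have hbinv : b' * b'⁻¹ = 1 := mul_inv_cancel₀ hb'
      linear_combination e + (θ ^ k + θ⁻¹ ^ k) * hbinv
  -- finish
  rw [step1, step4]
  simp only [Set.mem_union, not_or]
  constructor
  · rintro ⟨h1, h2⟩
    refine ⟨fun hmem => ?_, fun hmem => ?_⟩
    · obtain ⟨k, hk, hc⟩ := (hmemiff (-μ)).mp hmem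
      exact h2 k hk hc
    · obtain ⟨k, hk, hc⟩ := (hmemiff μ).mp hmem
      exact h1 k hk hc
  · rintro ⟨h1, h2⟩
    exact ⟨fun k hk hc => h2 ((hmemiff μ).mpr ⟨k, hk, hc⟩),
           fun k hk hc => h1 ((hmemiff (-μ)).mpr ⟨k, hk, hc⟩)⟩
end

section
/- Let F_q be a finite field of characteristic 2 and n ≥ 1 an integer. Write n+1 = 2^r·(m+1) with r ≥ 0 and m+1 odd. Then m is even, E_n(X) = E_m(X)^{2^r} · X^{2^r − 1}, and moreover E_m(X) = ∏_{i=1}^{m/2} (X − (θ^i + θ^{−i}))² over an algebraic closure of F_q, where θ is a primitive (m+1)-th root of unity in that closure. -/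
/-!
In characteristic 2 the recurrence `E_{n+2} = X E_{n+1} + E_n` gives `E_{2k+1} = X E_k²` and
`E_{2k+2} = (E_{k+1} + E_k)²`. Peeling the factors of 2 off `n + 1` with the first identity gives
`E_n = E_m^{2^r} X^{2^r - 1}`, and the second shows that `E_{2k}` is the square of a monic
polynomial `W` of degree `k`. The identity `(y - y⁻¹) E_m(y + y⁻¹) = y^{m+1} - y^{-(m+1)}` makes
the `k` distinct elements `θ^i + θ^{-i}`, `1 ≤ i ≤ k`, roots of `E_{2k}`, hence of `W`, so `W` is
the product of the corresponding linear factors.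
-/

open Polynomial

section CommRing

variable {R : Type*} [CommRing R]

theorem sub_mul_dickson_two_one_eval_add {x y : R} (hxy : x * y = 1) :
    ∀ n, (x - y) * (dickson 2 (1 : R) n).eval (x + y) = x ^ (n + 1) - y ^ (n + 1)
  | 0 => by simp only [dickson_zero, zero_add, pow_one, eval_sub, eval_ofNat]; norm_num
  | 1 => by simp only [dickson_one, eval_X]; ring
  | n + 2 => by
    have h0 := sub_mul_dickson_two_one_eval_add hxy n
    have h1 := sub_mul_dickson_two_one_eval_add hxy (n + 1)
    simp only [dickson_add_two, C_1, one_mul, eval_sub, eval_mul, eval_X]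
    linear_combination (x + y) * h1 - h0 + (x ^ (n + 1) - y ^ (n + 1)) * hxy

theorem dickson_two_one_eval_add_eq_zero [IsDomain R] {x y : R} (hxy : x * y = 1) (hne : x ≠ y)
    {n : ℕ} (hx : x ^ (n + 1) = 1) : (dickson 2 (1 : R) n).eval (x + y) = 0 := by
  have hy : y ^ (n + 1) = 1 := by rw [← one_mul (y ^ _), ← hx, ← mul_pow, hxy, one_pow, hx]
  have h := sub_mul_dickson_two_one_eval_add hxy n
  rw [hx, hy, sub_self] at h
  exact (mul_eq_zero.mp h).resolve_left (sub_ne_zero.mpr hne)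

theorem dickson_two_one_monic_and_natDegree [Nontrivial R] :
    ∀ n, (dickson 2 (1 : R) n).Monic ∧ (dickson 2 (1 : R) n).natDegree = n
  | 0 => by simp only [dickson_zero]; norm_num
  | 1 => by simp [monic_X]
  | n + 2 => by
    have h0d := (dickson_two_one_monic_and_natDegree n).2
    obtain ⟨h1m, h1d⟩ := dickson_two_one_monic_and_natDegree (n + 1)
    have hXd : (X * dickson 2 (1 : R) (n + 1)).natDegree = n + 2 := by
      rw [natDegree_X_mul h1m.ne_zero, h1d]
    have hlt : (dickson 2 (1 : R) n).natDegree < (X * dickson 2 (1 : R) (n + 1)).natDegree := by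
      omega
    rw [dickson_add_two, C_1, one_mul]
    exact ⟨(monic_X.mul h1m).sub_of_left (degree_lt_degree hlt),
      by rw [natDegree_sub_eq_left_of_natDegree_lt hlt, hXd]⟩

theorem dickson_two_one_monic [Nontrivial R] (n : ℕ) : (dickson 2 (1 : R) n).Monic :=
  (dickson_two_one_monic_and_natDegree n).1

theorem natDegree_dickson_two_one [Nontrivial R] (n : ℕ) :
    (dickson 2 (1 : R) n).natDegree = n :=
  (dickson_two_one_monic_and_natDegree n).2

end CommRing

section CharTwo

variable {R : Type*} [CommRing R] [CharP R 2]

theorem dickson_two_one_add_two_charTwo (n : ℕ) :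
    dickson 2 (1 : R) (n + 2) = X * dickson 2 (1 : R) (n + 1) + dickson 2 (1 : R) n := by
  rw [dickson_add_two, C_1, one_mul, CharTwo.sub_eq_add]

theorem dickson_two_one_two_mul_add_one_and_add_two : ∀ k,
    dickson 2 (1 : R) (2 * k + 1) = X * dickson 2 (1 : R) k ^ 2 ∧
      dickson 2 (1 : R) (2 * k + 2) = (dickson 2 (1 : R) (k + 1) + dickson 2 (1 : R) k) ^ 2
  | 0 => by
    have h2 : (2 : R[X]) = 0 := CharTwo.two_eq_zero
    have h0 : dickson 2 (1 : R) 0 = 1 := by rw [dickson_zero]; norm_num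
    refine ⟨by simp [h0], ?_⟩
    rw [dickson_add_two, dickson_one, h0, C_1]
    linear_combination (-(X + 1)) * h2
  | k + 1 => by
    obtain ⟨hodd, heven⟩ := dickson_two_one_two_mul_add_one_and_add_two k
    have h2 : (2 : R[X]) = 0 := CharTwo.two_eq_zero
    have hodd' : dickson 2 (1 : R) (2 * (k + 1) + 1) = X * dickson 2 (1 : R) (k + 1) ^ 2 := by
      rw [show 2 * (k + 1) + 1 = 2 * k + 1 + 2 by ring, dickson_two_one_add_two_charTwo, heven,
        hodd]
      linear_combination
        X * (dickson 2 (1 : R) (k + 1) + dickson 2 (1 : R) k) * dickson 2 (1 : R) k * h2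
    refine ⟨hodd', ?_⟩
    rw [show 2 * (k + 1) + 2 = 2 * k + 2 + 2 by ring, dickson_two_one_add_two_charTwo,
      show 2 * k + 2 + 1 = 2 * (k + 1) + 1 by ring, hodd', heven, dickson_two_one_add_two_charTwo]
    linear_combination
      -X * dickson 2 (1 : R) (k + 1) * (dickson 2 (1 : R) (k + 1) + dickson 2 (1 : R) k) * h2

theorem dickson_two_one_two_mul_add_one (k : ℕ) :
    dickson 2 (1 : R) (2 * k + 1) = X * dickson 2 (1 : R) k ^ 2 :=
  (dickson_two_one_two_mul_add_one_and_add_two k).1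

theorem dickson_two_one_two_mul_add_two (k : ℕ) :
    dickson 2 (1 : R) (2 * k + 2) = (dickson 2 (1 : R) (k + 1) + dickson 2 (1 : R) k) ^ 2 :=
  (dickson_two_one_two_mul_add_one_and_add_two k).2

theorem dickson_two_one_of_add_one_eq_two_pow_mul {n m : ℕ} :
    ∀ r, n + 1 = 2 ^ r * (m + 1) →
      dickson 2 (1 : R) n = dickson 2 (1 : R) m ^ 2 ^ r * X ^ (2 ^ r - 1)
  | 0, h => by simp_all
  | r + 1, h => by
    have h' : n + 1 = 2 * (2 ^ r * (m + 1)) := by rw [h]; ring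
    have hpos : 0 < 2 ^ r * (m + 1) := by positivity
    obtain ⟨k, rfl⟩ : ∃ k, n = 2 * k + 1 := ⟨2 ^ r * (m + 1) - 1, by omega⟩
    have hexp : 2 ^ (r + 1) - 1 = 2 * (2 ^ r - 1) + 1 := by
      have := Nat.one_le_two_pow (n := r)
      rw [pow_succ]
      omega
    rw [dickson_two_one_two_mul_add_one,
      dickson_two_one_of_add_one_eq_two_pow_mul (m := m) r (by omega), hexp]
    ring

end CharTwo

theorem Polynomial.Monic.eq_prod_X_sub_C_of_injOn {R ι : Type*} [CommRing R] [IsDomain R]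
    {p : R[X]} (hp : p.Monic) {s : Finset ι} {f : ι → R} (hf : Set.InjOn f s)
    (hroot : ∀ i ∈ s, p.IsRoot (f i)) (hdeg : p.natDegree = s.card) :
    p = ∏ i ∈ s, (X - C (f i)) := by
  have hnodup : (s.val.map f).Nodup := s.nodup.map_on fun i hi j hj => hf hi hj
  have hle : s.val.map f ≤ p.roots := by
    rw [Multiset.le_iff_subset hnodup]
    intro a ha
    obtain ⟨i, hi, rfl⟩ := Multiset.mem_map.mp ha
    exact (mem_roots hp.ne_zero).mpr (hroot i hi)
  have hdvd := (Multiset.prod_X_sub_C_dvd_iff_le_roots hp.ne_zero _).mpr hle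
  rw [Multiset.map_map] at hdvd
  refine eq_of_monic_of_dvd_of_natDegree_le (monic_prod_of_monic _ _ fun i _ => monic_X_sub_C _)
    hp hdvd ?_
  rw [natDegree_prod_of_monic _ _ fun i _ => monic_X_sub_C _]
  simp [hdeg]

theorem eq_or_mul_eq_one_of_add_inv_eq_add_inv {K : Type*} [Field K] {x y : K} (hx : x ≠ 0)
    (hy : y ≠ 0) (h : x + x⁻¹ = y + y⁻¹) : x = y ∨ x * y = 1 := by
  have : (x - y) * (x * y - 1) = 0 := by
    field_simp at h
    linear_combination h
  rcases mul_eq_zero.mp this with h | h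
  · exact .inl (sub_eq_zero.mp h)
  · exact .inr (sub_eq_zero.mp h)

theorem IsPrimitiveRoot.pow_add_pow_inv_injOn {K : Type*} [Field K] {θ : K} {k : ℕ}
    (hθ : IsPrimitiveRoot θ (2 * k + 1)) :
    Set.InjOn (fun i => θ ^ i + θ⁻¹ ^ i) (Finset.Icc 1 k) := by
  intro i hi j hj hij
  simp only [Finset.coe_Icc, Set.mem_Icc] at hi hj
  have hθ0 : θ ≠ 0 := hθ.ne_zero (by omega)
  rcases eq_or_mul_eq_one_of_add_inv_eq_add_inv (pow_ne_zero i hθ0) (pow_ne_zero j hθ0)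
    (by simpa using hij) with h | h
  · exact hθ.pow_inj (by omega) (by omega) h
  · rw [← pow_add] at h
    exact absurd h (hθ.pow_ne_one_of_pos_of_lt (by omega) (by omega))

theorem dickson_two_one_two_mul_eq_prod_sq {K : Type*} [Field K] [CharP K 2] {k : ℕ} {θ : K}
    (hθ : IsPrimitiveRoot θ (2 * k + 1)) :
    dickson 2 (1 : K) (2 * k) = ∏ i ∈ Finset.Icc 1 k, (X - C (θ ^ i + θ⁻¹ ^ i)) ^ 2 := by
  rcases k with _ | j
  · simp only [mul_zero, dickson_zero, zero_lt_one, Finset.Icc_eq_empty_of_lt, Finset.prod_empty]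
    norm_num
  set W := dickson 2 (1 : K) (j + 1) + dickson 2 (1 : K) j
  have hsq : dickson 2 (1 : K) (2 * (j + 1)) = W ^ 2 := dickson_two_one_two_mul_add_two j
  have hθ0 : θ ≠ 0 := hθ.ne_zero (by omega)
  have hWroot (i : ℕ) (hi : i ∈ Finset.Icc 1 (j + 1)) : W.IsRoot (θ ^ i + θ⁻¹ ^ i) := by
    rw [Finset.mem_Icc] at hi
    have hθi : θ ^ i ≠ 0 := pow_ne_zero i hθ0
    have hne : θ ^ i ≠ θ⁻¹ ^ i := by
      rw [inv_pow, Ne, ← mul_eq_one_iff_eq_inv₀ hθi, ← pow_add]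
      exact hθ.pow_ne_one_of_pos_of_lt (by omega) (by omega)
    have hpow : (θ ^ i) ^ (2 * (j + 1) + 1) = 1 := by
      rw [← pow_mul, mul_comm, pow_mul, hθ.pow_eq_one, one_pow]
    have h := dickson_two_one_eval_add_eq_zero (by rw [inv_pow, mul_inv_cancel₀ hθi]) hne hpow
    rw [hsq, eval_pow] at h
    exact pow_eq_zero_iff two_ne_zero |>.mp h
  have hlt : (dickson 2 (1 : K) j).natDegree < (dickson 2 (1 : K) (j + 1)).natDegree := by
    simp only [natDegree_dickson_two_one]; omega
  have hWmonic : W.Monic := (dickson_two_one_monic _).add_of_left (degree_lt_degree hlt)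
  have hWdeg : W.natDegree = j + 1 := by
    rw [natDegree_add_eq_left_of_natDegree_lt hlt, natDegree_dickson_two_one]
  rw [hsq, hWmonic.eq_prod_X_sub_C_of_injOn hθ.pow_add_pow_inv_injOn hWroot
    (by simpa using hWdeg), Finset.prod_pow]

theorem stmt_17_general (F : Type*) [Field F] [CharP F 2]
    (n m r : ℕ) (hnm : n + 1 = 2 ^ r * (m + 1))
    (hm : Odd (m + 1))
    (θ : AlgebraicClosure F) (hθ : IsPrimitiveRoot θ (m + 1)) :
    Even m ∧
    Polynomial.dickson 2 (1 : F) n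
      = (Polynomial.dickson 2 (1 : F) m) ^ (2 ^ r)
          * Polynomial.X ^ (2 ^ r - 1) ∧
    (Polynomial.dickson 2 (1 : F) m).map (algebraMap F (AlgebraicClosure F))
      = ∏ i ∈ Finset.Icc 1 (m / 2),
          (Polynomial.X - Polynomial.C (θ ^ i + θ⁻¹ ^ i)) ^ 2 := by
  obtain ⟨k, hk⟩ := hm
  obtain rfl : m = 2 * k := by omega
  refine ⟨even_two_mul k, dickson_two_one_of_add_one_eq_two_pow_mul r hnm, ?_⟩
  rw [map_dickson, map_one, Nat.mul_div_cancel_left k two_pos]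
  exact dickson_two_one_two_mul_eq_prod_sq hθ

/-- Bhargava–Zieve factorization of `E_n` (Dickson, second kind, parameter 1)
in characteristic 2, general case `n + 1 = 2^r (m+1)` with `m+1` odd. -/
theorem stmt_17 (F : Type*) [Field F] [Fintype F] [CharP F 2]
    (n m r : ℕ) (hn : 1 ≤ n) (hnm : n + 1 = 2 ^ r * (m + 1))
    (hm : Odd (m + 1))
    (θ : AlgebraicClosure F) (hθ : IsPrimitiveRoot θ (m + 1)) :
    Even m ∧
    Polynomial.dickson 2 (1 : F) n
      = (Polynomial.dickson 2 (1 : F) m) ^ (2 ^ r)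
          * Polynomial.X ^ (2 ^ r - 1) ∧
    (Polynomial.dickson 2 (1 : F) m).map (algebraMap F (AlgebraicClosure F))
      = ∏ i ∈ Finset.Icc 1 (m / 2),
          (Polynomial.X - Polynomial.C (θ ^ i + θ⁻¹ ^ i)) ^ 2 :=
  stmt_17_general F n m r hnm hm θ hθ
end
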